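/- arXiv:math/0305193 — 4 statements merged into one kernel-verified Lean document; each statement's English description precedes it below -/
import Mathlib

section
/- Let μ be a Borel probability measure on the dyadic Cantor set 𝕂 satisfying the non-homogeneous Markov property (M). Then there exists a strictly increasing sequence of natural numbers (n_l) such that for μ-almost every x ∈ 𝕂, lim_{l→∞} (−1/(n_l log 2)) log μ(I_{n_l}(x)) = h^*(μ), where h^*(μ) is the upper entropy of μ; likewise there exists a strictly increasing sequence (m_l) such that (−1/(m_l log 2)) log μ(I_{m_l}(x)) → h_*(μ) μ-almost everywhere. -/
open MeasureTheory Filter Topology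
open scoped ENNReal NNReal

noncomputable section

/-- The dyadic Cantor set `𝕂 = {0,1}^ℕ`. -/
abbrev K : Type := ℕ → Bool

/-- The metric `d(x,y) = (1/2)^(first index where x and y differ)` on `𝕂`. -/
instance : MetricSpace K := PiNat.metricSpace

/-- The cylinder of generation `n` determined by the word `ε : Fin n → Bool`. -/
def cyl {n : ℕ} (ε : Fin n → Bool) : Set K := {x | ∀ i : Fin n, x i = ε i}

/-- The cylinder `I_n(x)` of generation `n` containing the point `x`. -/
def cylAt (x : K) (n : ℕ) : Set K := cyl (fun i : Fin n => x i)

/-- The weight attributed to a child cylinder whose parent's last letter is `e`, when the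
new letter is `b`, by the non-homogeneous Markov process with weights `pq = (pₙ, qₙ)`. -/
def weight (pq : ℝ × ℝ) (e b : Bool) : ℝ :=
  if e = false then (if b = false then pq.1 else 1 - pq.1)
  else (if b = false then pq.2 else 1 - pq.2)

/-- A Borel measure `μ` on `𝕂` satisfies the non-homogeneous Markov property (M)
for the sequences `(p n)`, `(q n)`: `μ(I₀) = p₀`, `μ(I₁) = 1 - p₀`, and the ratio
`μ(IJ)/μ(I)` for a cylinder `I ∈ ℱ_{n+1}` and a child `IJ ∈ ℱ_{n+2}` is `p (n+1)`,
`1 - p (n+1)`, `q (n+1)` or `1 - q (n+1)` according to the last letter of `I` and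
the new letter of `IJ`. -/
def MarkovMeasure (μ : Measure K) (p q : ℕ → ℝ) : Prop :=
  μ (cyl ![false]) = ENNReal.ofReal (p 0) ∧
  μ (cyl ![true]) = ENNReal.ofReal (1 - p 0) ∧
  ∀ (n : ℕ) (ε : Fin (n + 1) → Bool) (b : Bool),
    μ (cyl (Fin.snoc ε b)) =
      μ (cyl ε) * ENNReal.ofReal (weight (p (n + 1), q (n + 1)) (ε (Fin.last n)) b)

/-- `Σ_{I ∈ ℱ_n} μ(I) log μ(I)` (with the convention `0 · log 0 = 0`,
automatic since `Real.log 0 = 0`). -/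
def entropySum (μ : Measure K) (n : ℕ) : ℝ :=
  ∑ ε : Fin n → Bool, (μ (cyl ε)).toReal * Real.log (μ (cyl ε)).toReal

/-- The lower entropy `h_*(μ) = liminf (-1/(n log 2)) Σ_{I ∈ ℱ_n} μ(I) log μ(I)`. -/
def hLow (μ : Measure K) : ℝ :=
  liminf (fun n : ℕ => (-1 / (n * Real.log 2)) * entropySum μ n) atTop

/-- The upper entropy `h^*(μ) = limsup (-1/(n log 2)) Σ_{I ∈ ℱ_n} μ(I) log μ(I)`. -/
def hUpp (μ : Measure K) : ℝ :=
  limsup (fun n : ℕ => (-1 / (n * Real.log 2)) * entropySum μ n) atTop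

/-- The lower Hausdorff dimension of a measure:
`dim_*(μ) = inf {dim_H E : E ⊆ 𝕂 Borel, μ(E) > 0}`. -/
def dimLow (μ : Measure K) : ℝ≥0∞ :=
  ⨅ (E : Set K) (_ : MeasurableSet E) (_ : 0 < μ E), dimH E

/-- The upper Hausdorff dimension of a measure:
`dim^*(μ) = inf {dim_H E : E ⊆ 𝕂 Borel, μ(𝕂 ∖ E) = 0}`. -/
def dimUpp (μ : Measure K) : ℝ≥0∞ :=
  ⨅ (E : Set K) (_ : MeasurableSet E) (_ : μ Eᶜ = 0), dimH E


/-!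
Along a word, `-log μ(Iₙ(x)) = Jₙ(x) := ∑_{k<n} Wₖ(x)` with `Wₖ = -log P(xₖ | xₖ₋₁)`, and
`𝔼 Jₙ = -∑_{I ∈ ℱₙ} μ(I) log μ(I)`. So it suffices to find a sparse subsequence along which the
normalised entropy converges to `h^*(μ)` (resp. `h_*(μ)`) and `Jₙ - 𝔼 Jₙ = o(n)` almost surely;
by Chebyshev and Borel–Cantelli the latter follows from `Var Jₙ = O(n^{3/2})` once `n_l ≥ (l+1)^8`.

The variance is computed through the Doob martingale of `Jₙ`, whose increments are
`(Wₖ - 𝔼[Wₖ | x₀ … xₖ₋₁]) + Γₖ ηₖ`: here `ηₖ` is the innovation of the indicator of `xₖ = 0`,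
which propagates to later letters through the factors `p_t - q_t`, and
`Γₖ = ∑_{j>k} (H(p_j) - H(q_j)) ∏_{k<t<j} (p_t - q_t)` collects its effect on the later
conditional entropies. The chain may mix arbitrarily slowly, but `|H(p) - H(q)| ≤ u (2 - log u)`
with `u = 1 - |p - q|`, so a telescoping sum gives `Γₖ = O(log n)` and `Var Jₙ = O(n log² n)`.
-/

open Finset Real

lemma Real.negMulLog_le_two_mul_sqrt {x : ℝ} (hx₀ : 0 ≤ x) (hx₁ : x ≤ 1) :
    negMulLog x ≤ 2 * √x := by
  rcases hx₀.eq_or_lt with rfl | hx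
  · simp
  have h := abs_log_mul_self_rpow_lt x (1 / 2) hx hx₁ one_half_pos
  rw [← sqrt_eq_rpow, abs_lt] at h
  have hs := mul_self_sqrt hx.le
  rw [negMulLog]
  nlinarith [sqrt_nonneg x]

lemma Real.mul_log_sq_le_four {x : ℝ} (hx₀ : 0 ≤ x) (hx₁ : x ≤ 1) : x * log x ^ 2 ≤ 4 := by
  rcases hx₀.eq_or_lt with rfl | hx
  · simp
  have h := abs_log_mul_self_rpow_lt x (1 / 2) hx hx₁ one_half_pos
  rw [← sqrt_eq_rpow, abs_lt] at h
  have hs := mul_self_sqrt hx.le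
  nlinarith

lemma Real.binEntropy_le_of_min_le {r u : ℝ} (hr₀ : 0 ≤ r) (hr₁ : r ≤ 1) (hu₁ : u ≤ 1)
    (hru : min r (1 - r) ≤ u) : binEntropy r ≤ u * (2 - log u) := by
  wlog hr : r ≤ 2⁻¹ generalizing r
  · rw [← binEntropy_one_sub]
    exact this (by linarith) (by linarith) (by rwa [sub_sub_cancel, min_comm]) (by linarith)
  have hu₀ : 0 ≤ u := (le_min hr₀ (by linarith)).trans hru
  have hlog : log u ≤ 0 := log_nonpos hu₀ hu₁
  rcases le_or_gt u 2⁻¹ with hu | hu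
  · have hmono : binEntropy r ≤ binEntropy u :=
      binEntropy_strictMonoOn.monotoneOn ⟨hr₀, hr⟩ ⟨hu₀, hu⟩
        ((min_eq_left (by linarith)).symm.trans_le hru)
    have h1 := negMulLog_le_one_sub_self (x := 1 - u) (by linarith)
    rw [binEntropy_eq_negMulLog_add_negMulLog_one_sub u, negMulLog] at hmono
    nlinarith
  · have := binEntropy_le_log_two (p := r)
    have := log_two_lt_d9
    nlinarith

lemma Real.abs_binEntropy_sub_le {a b : ℝ} (ha : a ∈ Set.Icc (0 : ℝ) 1)
    (hb : b ∈ Set.Icc (0 : ℝ) 1) :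
    |binEntropy a - binEntropy b| ≤ (1 - |a - b|) * (2 - log (1 - |a - b|)) := by
  obtain ⟨ha₀, ha₁⟩ := ha
  obtain ⟨hb₀, hb₁⟩ := hb
  have hu : 1 - |a - b| ≤ 1 := by linarith [abs_nonneg (a - b)]
  have hA := binEntropy_le_of_min_le ha₀ ha₁ hu (by cases abs_cases (a - b) <;> grind)
  have hB := binEntropy_le_of_min_le hb₀ hb₁ hu (by cases abs_cases (a - b) <;> grind)
  have := binEntropy_nonneg ha₀ ha₁
  have := binEntropy_nonneg hb₀ hb₁
  rw [abs_le]
  constructor <;> linarith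

lemma Real.mul_two_sub_log_le {u N : ℝ} (hu₀ : 0 ≤ u) (hu₁ : u ≤ 1) (hN : 1 ≤ N) :
    u * (2 - log u) ≤ 2 * (1 + log N) * u + 4 / N := by
  have hN₀ : 0 < N := by linarith
  have hlogN := log_nonneg hN
  -- above `1 / N²`, `-log u ≤ 2 log N`; below it, `-u log u ≤ 2 √u ≤ 2 / N`
  rcases le_or_gt (1 / N ^ 2) u with hu | hu
  · have : -log u ≤ 2 * log N := by
      have := log_le_log (by positivity) hu
      rw [one_div, log_inv, log_pow] at this
      push_cast at this
      linarith
    have : 0 ≤ 4 / N := by positivity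
    nlinarith
  · have hsqrt : √u ≤ 1 / N := by
      rw [show 1 / N = √((1 / N) ^ 2) from (sqrt_sq (by positivity)).symm]
      exact sqrt_le_sqrt (by rw [div_pow, one_pow]; exact hu.le)
    have hneg := negMulLog_le_two_mul_sqrt hu₀ hu₁
    have hu' : u ≤ 1 / N := hu.le.trans (by
      rw [div_le_div_iff_of_pos_left one_pos (by positivity) hN₀]; nlinarith)
    rw [negMulLog] at hneg
    have : 0 ≤ 2 * (1 + log N) * u := by positivity
    have : 4 / N = 2 * (1 / N) + 2 * (1 / N) := by ring
    nlinarith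

lemma Finset.sum_one_sub_mul_prod_Ico {R : Type*} [CommRing R] (v : ℕ → R) {a b : ℕ}
    (hab : a ≤ b) :
    ∑ j ∈ Ico a b, (1 - v j) * ∏ t ∈ Ico a j, v t = 1 - ∏ t ∈ Ico a b, v t := by
  induction b, hab using Nat.le_induction with
  | base => simp
  | succ b hab ih => rw [sum_Ico_succ_top hab, ih, prod_Ico_succ_top hab]; ring

namespace Markov

lemma weight_nonneg {pq : ℝ × ℝ} (h₁ : pq.1 ∈ Set.Icc (0 : ℝ) 1) (h₂ : pq.2 ∈ Set.Icc (0 : ℝ) 1)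
    (e b : Bool) : 0 ≤ weight pq e b := by
  cases e <;> cases b <;> simp only [weight] <;> grind

lemma weight_le_one {pq : ℝ × ℝ} (h₁ : pq.1 ∈ Set.Icc (0 : ℝ) 1)
    (h₂ : pq.2 ∈ Set.Icc (0 : ℝ) 1) (e b : Bool) : weight pq e b ≤ 1 := by
  cases e <;> cases b <;> simp only [weight] <;> grind

lemma weight_true (pq : ℝ × ℝ) (e : Bool) : weight pq e true = 1 - weight pq e false := by
  cases e <;> simp [weight]

lemma sum_weight (pq : ℝ × ℝ) (e : Bool) : ∑ b : Bool, weight pq e b = 1 := by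
  rw [Fintype.sum_bool, weight_true]; ring

/-- The empty word is given the last letter `false`, so that `transProb p q 0 false` is the
initial distribution `(p 0, 1 - p 0)` and `zeroInd` of the empty word is `1`. -/
def lastLetter : {n : ℕ} → (Fin n → Bool) → Bool
  | 0, _ => false
  | _ + 1, ε => ε (Fin.last _)

variable (p q : ℕ → ℝ)

def transProb (k : ℕ) : Bool → Bool → ℝ := weight (p k, q k)

def wordProb : {n : ℕ} → (Fin n → Bool) → ℝ
  | 0, _ => 1
  | n + 1, ε => wordProb (Fin.init ε) * transProb p q n (lastLetter (Fin.init ε)) (ε (Fin.last n))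

def expect (n : ℕ) (g : (Fin n → Bool) → ℝ) : ℝ := ∑ ε, wordProb p q ε * g ε

/-- The conditional expectation of a function of `k + 1` letters given the first `k`. -/
def stepMean (k : ℕ) (g : (Fin (k + 1) → Bool) → ℝ) (ε : Fin k → Bool) : ℝ :=
  ∑ b : Bool, transProb p q k (lastLetter ε) b * g (Fin.snoc ε b)

def IsMartingaleDiff (k : ℕ) (d : (Fin (k + 1) → Bool) → ℝ) : Prop :=
  ∀ ε, stepMean p q k d ε = 0

variable {p q}

@[simp]
lemma lastLetter_snoc {n : ℕ} (ε : Fin n → Bool) (b : Bool) : lastLetter (Fin.snoc ε b) = b := by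
  show (Fin.snoc ε b : Fin (n + 1) → Bool) (Fin.last n) = b
  exact Fin.snoc_last _ _

lemma wordProb_snoc {n : ℕ} (ε : Fin n → Bool) (b : Bool) :
    wordProb p q (Fin.snoc ε b) = wordProb p q ε * transProb p q n (lastLetter ε) b := by
  simp [wordProb]

lemma sum_transProb (k : ℕ) (e : Bool) : ∑ b : Bool, transProb p q k e b = 1 :=
  sum_weight _ e

lemma sum_fin_succ_eq_sum_snoc {n : ℕ} (F : (Fin (n + 1) → Bool) → ℝ) :
    ∑ ε, F ε = ∑ ε : Fin n → Bool, ∑ b : Bool, F (Fin.snoc ε b) := by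
  rw [← (Fin.snocEquiv fun _ => Bool).sum_comp F, Fintype.sum_prod_type, Finset.sum_comm]
  rfl

lemma expect_succ (n : ℕ) (g : (Fin (n + 1) → Bool) → ℝ) :
    expect p q (n + 1) g = expect p q n (stepMean p q n g) := by
  simp only [expect, stepMean, sum_fin_succ_eq_sum_snoc, wordProb_snoc, Finset.mul_sum, mul_assoc]

lemma expect_zero (g : (Fin 0 → Bool) → ℝ) : expect p q 0 g = g default := by
  rw [expect, Fintype.sum_unique]
  exact (one_mul _).trans (congrArg g (Subsingleton.elim _ _))

lemma expect_add (n : ℕ) (g h : (Fin n → Bool) → ℝ) :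
    expect p q n (fun ε => g ε + h ε) = expect p q n g + expect p q n h := by
  simp only [expect, mul_add, Finset.sum_add_distrib]

lemma expect_const_mul (n : ℕ) (r : ℝ) (g : (Fin n → Bool) → ℝ) :
    expect p q n (fun ε => r * g ε) = r * expect p q n g := by
  simp only [expect, Finset.mul_sum, mul_left_comm]

lemma expect_congr {n : ℕ} {g h : (Fin n → Bool) → ℝ} (hgh : ∀ ε, g ε = h ε) :
    expect p q n g = expect p q n h := by
  simp only [expect, hgh]

lemma stepMean_comp_init (k : ℕ) (g : (Fin k → Bool) → ℝ) (ε : Fin k → Bool) :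
    stepMean p q k (fun η => g (Fin.init η)) ε = g ε := by
  simp only [stepMean, Fin.init_snoc, ← Finset.sum_mul, sum_transProb, one_mul]

lemma expect_const (n : ℕ) (r : ℝ) : expect p q n (fun _ => r) = r := by
  induction n with
  | zero => rw [expect_zero]
  | succ n ih => rw [expect_succ, expect_congr (stepMean_comp_init n fun _ => r), ih]

lemma expect_comp_init (n : ℕ) (g : (Fin n → Bool) → ℝ) :
    expect p q (n + 1) (fun ε => g (Fin.init ε)) = expect p q n g := by
  rw [expect_succ, expect_congr (stepMean_comp_init n g)]

lemma expect_mul_martingaleDiff {k : ℕ} (g : (Fin k → Bool) → ℝ) {d : (Fin (k + 1) → Bool) → ℝ}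
    (hd : IsMartingaleDiff p q k d) : expect p q (k + 1) (fun ε => g (Fin.init ε) * d ε) = 0 := by
  rw [expect_succ, ← expect_const k 0]
  refine expect_congr fun ε => ?_
  simp only [stepMean, Fin.init_snoc, mul_left_comm _ (g ε), ← Finset.mul_sum]
  rw [← stepMean, hd ε, mul_zero]

def prefixSum (D : ∀ k, (Fin (k + 1) → Bool) → ℝ) : ∀ N, (Fin N → Bool) → ℝ
  | 0, _ => 0
  | N + 1, ε => prefixSum D N (Fin.init ε) + D N ε

lemma prefixSum_congr {D D' : ∀ k, (Fin (k + 1) → Bool) → ℝ} :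
    ∀ {N : ℕ}, (∀ k < N, D k = D' k) → prefixSum D N = prefixSum D' N
  | 0, _ => rfl
  | N + 1, h => by
    ext ε
    simp only [prefixSum, prefixSum_congr fun k hk => h k (Nat.lt_succ_of_lt hk),
      h N (Nat.lt_succ_self N)]

lemma prefixSum_add (D D' : ∀ k, (Fin (k + 1) → Bool) → ℝ) :
    ∀ (N : ℕ) (ε : Fin N → Bool),
      prefixSum (fun k η => D k η + D' k η) N ε = prefixSum D N ε + prefixSum D' N ε
  | 0, _ => by simp [prefixSum]
  | N + 1, ε => by simp only [prefixSum, prefixSum_add D D' N]; ring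

lemma prefixSum_const_mul (r : ℝ) (D : ∀ k, (Fin (k + 1) → Bool) → ℝ) :
    ∀ (N : ℕ) (ε : Fin N → Bool),
      prefixSum (fun k η => r * D k η) N ε = r * prefixSum D N ε
  | 0, _ => by simp [prefixSum]
  | N + 1, ε => by simp only [prefixSum, prefixSum_const_mul r D N]; ring

lemma expect_prefixSum_sq {D : ∀ k, (Fin (k + 1) → Bool) → ℝ}
    (hD : ∀ k, IsMartingaleDiff p q k (D k)) :
    ∀ N : ℕ, expect p q N (fun ε => prefixSum D N ε ^ 2)
      = ∑ k ∈ range N, expect p q (k + 1) (fun ε => D k ε ^ 2)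
  | 0 => by simp [expect_zero, prefixSum]
  | N + 1 => by
    have hsq (ε : Fin (N + 1) → Bool) : prefixSum D (N + 1) ε ^ 2 = (prefixSum D N (Fin.init ε) ^ 2
        + D N ε ^ 2) + 2 * prefixSum D N (Fin.init ε) * D N ε := by
      simp only [prefixSum]; ring
    rw [expect_congr hsq, expect_add, expect_add, expect_comp_init N (fun ε => prefixSum D N ε ^ 2),
      expect_mul_martingaleDiff (fun ε => 2 * prefixSum D N ε) (hD N),
      expect_prefixSum_sq hD N, sum_range_succ, add_zero]

variable (p q)

def stepInfo (k : ℕ) (ε : Fin (k + 1) → Bool) : ℝ :=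
  -log (transProb p q k (lastLetter (Fin.init ε)) (lastLetter ε))

def info : ∀ N, (Fin N → Bool) → ℝ := prefixSum (stepInfo p q)

def condEntropy (k : ℕ) (ε : Fin k → Bool) : ℝ :=
  binEntropy (transProb p q k (lastLetter ε) false)

def zeroInd {n : ℕ} (ε : Fin n → Bool) : ℝ := if lastLetter ε = false then 1 else 0

def zeroProb (k : ℕ) : ℝ := expect p q k zeroInd

def centeredZero (k : ℕ) (ε : Fin k → Bool) : ℝ := zeroInd ε - zeroProb p q k

def corr (k : ℕ) : ℝ := p k - q k

def entropyGap (k : ℕ) : ℝ := binEntropy (p k) - binEntropy (q k)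

def innovation (k : ℕ) (ε : Fin (k + 1) → Bool) : ℝ :=
  centeredZero p q (k + 1) ε - corr p q k * centeredZero p q k (Fin.init ε)

/-- The total influence of the letter at position `i` on the conditional entropies of the
letters at positions `i + 1, …, N - 1`. -/
def gain (i N : ℕ) : ℝ :=
  ∑ j ∈ Ico (i + 1) N, entropyGap p q j * ∏ t ∈ Ico (i + 1) j, corr p q t

def doobIncrement (N k : ℕ) (ε : Fin (k + 1) → Bool) : ℝ :=
  (stepInfo p q k ε - condEntropy p q k (Fin.init ε)) + gain p q k N * innovation p q k ε

variable {p q}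

lemma stepInfo_snoc (k : ℕ) (ε : Fin k → Bool) (b : Bool) :
    stepInfo p q k (Fin.snoc ε b) = -log (transProb p q k (lastLetter ε) b) := by
  rw [stepInfo, Fin.init_snoc, lastLetter_snoc]

lemma stepMean_stepInfo (k : ℕ) (ε : Fin k → Bool) :
    stepMean p q k (stepInfo p q k) ε = condEntropy p q k ε := by
  simp only [stepMean, stepInfo_snoc, condEntropy, binEntropy_eq_negMulLog_add_negMulLog_one_sub,
    Fintype.sum_bool, transProb, weight_true, negMulLog]
  ring

lemma transProb_lastLetter_false {n : ℕ} (k : ℕ) (ε : Fin n → Bool) :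
    transProb p q k (lastLetter ε) false = q k + corr p q k * zeroInd ε := by
  unfold transProb zeroInd corr weight
  cases lastLetter ε <;> simp

lemma condEntropy_eq (k : ℕ) (ε : Fin k → Bool) :
    condEntropy p q k ε = binEntropy (q k) + entropyGap p q k * zeroInd ε := by
  unfold condEntropy entropyGap
  rw [transProb_lastLetter_false]
  unfold zeroInd corr
  cases lastLetter ε <;> simp

lemma zeroProb_succ (k : ℕ) : zeroProb p q (k + 1) = q k + corr p q k * zeroProb p q k := by
  have h (ε : Fin k → Bool) : stepMean p q k zeroInd ε = q k + corr p q k * zeroInd ε := by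
    rw [← transProb_lastLetter_false, stepMean, Fintype.sum_bool]
    simp [zeroInd]
  rw [zeroProb, expect_succ, expect_congr h, expect_add (g := fun _ => q k), expect_const,
    expect_const_mul, zeroProb]

lemma zeroInd_snoc {n : ℕ} (ε : Fin n → Bool) (b : Bool) :
    zeroInd (Fin.snoc ε b) = if b = false then 1 else 0 := by
  rw [zeroInd, lastLetter_snoc]

lemma centeredZero_zero (ε : Fin 0 → Bool) : centeredZero p q 0 ε = 0 := by
  simp [centeredZero, zeroProb, expect_zero, zeroInd, lastLetter]

lemma stepMean_centeredZero_succ (k : ℕ) (ε : Fin k → Bool) :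
    stepMean p q k (centeredZero p q (k + 1)) ε = corr p q k * centeredZero p q k ε := by
  simp only [stepMean, centeredZero, zeroInd_snoc, zeroProb_succ, Fintype.sum_bool, transProb,
    weight_true]
  rw [← transProb, transProb_lastLetter_false]
  simp only [Bool.true_eq_false, if_true, if_false]
  ring

lemma innovation_isMartingaleDiff (k : ℕ) : IsMartingaleDiff p q k (innovation p q k) := by
  intro ε
  have h := stepMean_comp_init (p := p) (q := q) k (fun η => corr p q k * centeredZero p q k η) ε
  simp only [stepMean, innovation, mul_sub, Finset.sum_sub_distrib] at h ⊢
  rw [← stepMean, stepMean_centeredZero_succ, h, sub_self]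

lemma centeredZero_eq_prefixSum : ∀ m : ℕ, centeredZero p q m
    = prefixSum (fun k η => (∏ t ∈ Ico (k + 1) m, corr p q t) * innovation p q k η) m
  | 0 => funext centeredZero_zero
  | m + 1 => by
    have hprod : ∀ k < m, (fun η => (∏ t ∈ Ico (k + 1) (m + 1), corr p q t) * innovation p q k η)
        = fun η => corr p q m * ((∏ t ∈ Ico (k + 1) m, corr p q t) * innovation p q k η) := by
      intro k hk
      ext η
      rw [prod_Ico_succ_top (by omega)]
      ring
    ext ε
    rw [prefixSum, prefixSum_congr hprod, prefixSum_const_mul, ← centeredZero_eq_prefixSum m,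
      Ico_self, prod_empty, one_mul, innovation]
    ring

lemma condEntropy_eq_expect_add (k : ℕ) (ε : Fin k → Bool) : condEntropy p q k ε
    = expect p q k (condEntropy p q k) + entropyGap p q k * centeredZero p q k ε := by
  rw [expect_congr (condEntropy_eq k), expect_add (g := fun _ => binEntropy (q k)), expect_const,
    expect_const_mul, condEntropy_eq, centeredZero, zeroProb]
  ring

lemma expect_info_succ (N : ℕ) : expect p q (N + 1) (info p q (N + 1))
    = expect p q N (info p q N) + expect p q N (condEntropy p q N) := by
  simp only [info, prefixSum]
  rw [expect_add, expect_comp_init, expect_succ, expect_congr (stepMean_stepInfo N)]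

lemma gain_succ {k N : ℕ} (h : k < N) : gain p q k (N + 1)
    = gain p q k N + entropyGap p q N * ∏ t ∈ Ico (k + 1) N, corr p q t := by
  rw [gain, sum_Ico_succ_top (by omega), ← gain]

lemma prefixSum_doobIncrement : ∀ N : ℕ,
    prefixSum (doobIncrement p q N) N = fun ε => info p q N ε - expect p q N (info p q N)
  | 0 => by
    ext ε
    simp [prefixSum, info, expect_zero]
  | N + 1 => by
    have hincr : ∀ k < N, doobIncrement p q (N + 1) k = fun η => doobIncrement p q N k η
        + entropyGap p q N * ((∏ t ∈ Ico (k + 1) N, corr p q t) * innovation p q k η) := by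
      intro k hk
      ext η
      rw [doobIncrement, doobIncrement, gain_succ hk]
      ring
    have hlast : gain p q N (N + 1) = 0 := by simp [gain]
    ext ε
    rw [prefixSum, prefixSum_congr hincr, prefixSum_add, prefixSum_const_mul,
      prefixSum_doobIncrement N, ← centeredZero_eq_prefixSum, doobIncrement, hlast,
      condEntropy_eq_expect_add, expect_info_succ]
    simp only [info, prefixSum]
    ring

lemma doobIncrement_isMartingaleDiff (N k : ℕ) :
    IsMartingaleDiff p q k (doobIncrement p q N k) := by
  intro ε
  have h := innovation_isMartingaleDiff (p := p) (q := q) k ε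
  have h' := stepMean_comp_init (p := p) (q := q) k (condEntropy p q k) ε
  simp only [stepMean, doobIncrement, mul_add, mul_sub, Finset.sum_add_distrib,
    Finset.sum_sub_distrib, mul_left_comm _ (gain p q k N), ← Finset.mul_sum] at h h' ⊢
  rw [← stepMean, stepMean_stepInfo, h', h, sub_self, mul_zero, add_zero]

lemma info_eq_neg_log_wordProb : ∀ {N : ℕ} (ε : Fin N → Bool), wordProb p q ε ≠ 0 →
    info p q N ε = -log (wordProb p q ε)
  | 0, _, _ => by simp [info, prefixSum, wordProb]
  | N + 1, ε, h => by
    rw [← Fin.snoc_init_self ε, wordProb_snoc] at h ⊢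
    rw [info, prefixSum, Fin.init_snoc, ← info, info_eq_neg_log_wordProb _ (left_ne_zero_of_mul h),
      stepInfo_snoc, log_mul (left_ne_zero_of_mul h) (right_ne_zero_of_mul h)]
    ring

section Bounds

variable (hp : ∀ n, p n ∈ Set.Icc (0 : ℝ) 1) (hq : ∀ n, q n ∈ Set.Icc (0 : ℝ) 1)
include hp hq

lemma transProb_nonneg (k : ℕ) (e b : Bool) : 0 ≤ transProb p q k e b :=
  weight_nonneg (hp k) (hq k) e b

lemma transProb_le_one (k : ℕ) (e b : Bool) : transProb p q k e b ≤ 1 :=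
  weight_le_one (hp k) (hq k) e b

lemma wordProb_nonneg : ∀ {n : ℕ} (ε : Fin n → Bool), 0 ≤ wordProb p q ε
  | 0, _ => zero_le_one
  | n + 1, ε => by
    rw [← Fin.snoc_init_self ε, wordProb_snoc]
    exact mul_nonneg (wordProb_nonneg _) (transProb_nonneg hp hq n _ _)

lemma expect_mono {n : ℕ} {g h : (Fin n → Bool) → ℝ} (hgh : ∀ ε, g ε ≤ h ε) :
    expect p q n g ≤ expect p q n h :=
  Finset.sum_le_sum fun ε _ => mul_le_mul_of_nonneg_left (hgh ε) (wordProb_nonneg hp hq ε)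

lemma expect_le_of_le {n : ℕ} {g : (Fin n → Bool) → ℝ} {r : ℝ} (hg : ∀ ε, g ε ≤ r) :
    expect p q n g ≤ r :=
  (expect_mono hp hq hg).trans_eq (expect_const n r)

lemma le_expect_of_le {n : ℕ} {g : (Fin n → Bool) → ℝ} {r : ℝ} (hg : ∀ ε, r ≤ g ε) :
    r ≤ expect p q n g :=
  (expect_const n r).symm.trans_le (expect_mono hp hq hg)

lemma expect_succ_le_of_stepMean_le {k : ℕ} {g : (Fin (k + 1) → Bool) → ℝ} {r : ℝ}
    (hg : ∀ ε, stepMean p q k g ε ≤ r) : expect p q (k + 1) g ≤ r := by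
  rw [expect_succ]
  exact expect_le_of_le hp hq hg

lemma abs_corr_le (k : ℕ) : |corr p q k| ≤ 1 := by
  obtain ⟨hp₀, hp₁⟩ := hp k
  obtain ⟨hq₀, hq₁⟩ := hq k
  rw [corr, abs_le]
  constructor <;> linarith

lemma zeroProb_mem_Icc (k : ℕ) : zeroProb p q k ∈ Set.Icc (0 : ℝ) 1 :=
  ⟨le_expect_of_le hp hq fun ε => by unfold zeroInd; split_ifs <;> norm_num,
    expect_le_of_le hp hq fun ε => by unfold zeroInd; split_ifs <;> norm_num⟩

lemma abs_centeredZero_le (k : ℕ) (ε : Fin k → Bool) : |centeredZero p q k ε| ≤ 1 := by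
  obtain ⟨h₀, h₁⟩ := zeroProb_mem_Icc hp hq k
  rw [centeredZero, zeroInd, abs_le]
  split_ifs <;> constructor <;> linarith

lemma innovation_sq_le (k : ℕ) (ε : Fin (k + 1) → Bool) : innovation p q k ε ^ 2 ≤ 4 := by
  have h₁ := abs_centeredZero_le hp hq (k + 1) ε
  have h₂ := abs_centeredZero_le hp hq k (Fin.init ε)
  have h₃ := abs_corr_le hp hq k
  have : |innovation p q k ε| ≤ 2 := by
    rw [innovation]
    calc _ ≤ |centeredZero p q (k + 1) ε| + |corr p q k| * |centeredZero p q k (Fin.init ε)| := by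
          rw [← abs_mul]; exact abs_sub _ _
      _ ≤ 2 := by nlinarith [abs_nonneg (corr p q k)]
  nlinarith [sq_abs (innovation p q k ε), abs_nonneg (innovation p q k ε)]

/-- The gain stays logarithmic even when `|corr|` is close to `1` (slow mixing), because then
both `p j` and `q j` are close to `0` or `1` and the entropy gap is small. -/
lemma abs_gain_le (i N : ℕ) (hN : 1 ≤ N) : |gain p q i N| ≤ 6 + 2 * log N := by
  have hN' : (1 : ℝ) ≤ N := by exact_mod_cast hN
  set v : ℕ → ℝ := fun t => |corr p q t|
  have hv (t : ℕ) : 0 ≤ v t ∧ v t ≤ 1 := ⟨abs_nonneg _, abs_corr_le hp hq t⟩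
  have hP (j : ℕ) : 0 ≤ ∏ t ∈ Ico (i + 1) j, v t := prod_nonneg fun t _ => (hv t).1
  have hterm (j : ℕ) : |entropyGap p q j| ≤ 2 * (1 + log N) * (1 - v j) + 4 / N :=
    (abs_binEntropy_sub_le (hp j) (hq j)).trans
      (mul_two_sub_log_le (u := 1 - v j) (by linarith [(hv j).2]) (by linarith [(hv j).1]) hN')
  have hcount : ∑ j ∈ Ico (i + 1) N, ∏ t ∈ Ico (i + 1) j, v t ≤ N :=
    calc _ ≤ ∑ j ∈ Ico (i + 1) N, (1 : ℝ) :=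
          sum_le_sum fun j _ => prod_le_one (fun t _ => (hv t).1) fun t _ => (hv t).2
      _ ≤ N := by simp
  have htele : ∑ j ∈ Ico (i + 1) N, (1 - v j) * ∏ t ∈ Ico (i + 1) j, v t ≤ 1 := by
    rcases le_or_gt (i + 1) N with h | h
    · rw [sum_one_sub_mul_prod_Ico v h]; linarith [hP N]
    · simp [Ico_eq_empty_of_le h.le]
  calc |gain p q i N| ≤ ∑ j ∈ Ico (i + 1) N, |entropyGap p q j| * ∏ t ∈ Ico (i + 1) j, v t := by
        simp only [gain, v, ← abs_prod, ← abs_mul]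
        exact abs_sum_le_sum_abs _ _
    _ ≤ ∑ j ∈ Ico (i + 1) N, (2 * (1 + log N) * (1 - v j) + 4 / N) * ∏ t ∈ Ico (i + 1) j, v t :=
        sum_le_sum fun j _ => mul_le_mul_of_nonneg_right (hterm j) (hP j)
    _ = 2 * (1 + log N) * ∑ j ∈ Ico (i + 1) N, (1 - v j) * ∏ t ∈ Ico (i + 1) j, v t
          + 4 / N * ∑ j ∈ Ico (i + 1) N, ∏ t ∈ Ico (i + 1) j, v t := by
        simp only [add_mul, sum_add_distrib, mul_sum, mul_assoc]
    _ ≤ 2 * (1 + log N) * 1 + 4 / N * N := by gcongr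
    _ = 6 + 2 * log N := by field_simp; ring

lemma condEntropy_nonneg (k : ℕ) (ε : Fin k → Bool) : 0 ≤ condEntropy p q k ε :=
  binEntropy_nonneg (transProb_nonneg hp hq k _ _) (transProb_le_one hp hq k _ _)

lemma expect_info_nonneg :
    ∀ N : ℕ, 0 ≤ expect p q N (info p q N)
  | 0 => by simp [info, prefixSum, expect_zero]
  | N + 1 => by
    rw [expect_info_succ]
    exact add_nonneg (expect_info_nonneg N)
      (le_expect_of_le hp hq (condEntropy_nonneg hp hq N))

lemma expect_info_le :
    ∀ N : ℕ, expect p q N (info p q N) ≤ N * log 2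
  | 0 => by simp [info, prefixSum, expect_zero]
  | N + 1 => by
    rw [expect_info_succ]
    have h : expect p q N (condEntropy p q N) ≤ log 2 :=
      expect_le_of_le hp hq fun _ => binEntropy_le_log_two
    push_cast
    linarith [expect_info_le N]

lemma stepMean_doobIncrement_sq_le (N k : ℕ) (ε : Fin k → Bool) :
    stepMean p q k (fun η => doobIncrement p q N k η ^ 2) ε ≤ 18 + 8 * gain p q k N ^ 2 := by
  set t := transProb p q k (lastLetter ε)
  have ht₀ (b : Bool) : 0 ≤ t b := transProb_nonneg hp hq k _ b
  have ht₁ (b : Bool) : t b ≤ 1 := transProb_le_one hp hq k _ b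
  set c := 2 + 8 * gain p q k N ^ 2
  have hpoint (b : Bool) : doobIncrement p q N k (Fin.snoc ε b) ^ 2 ≤ 2 * log (t b) ^ 2 + c := by
    have hW : 0 ≤ -log (t b) := neg_nonneg.2 (log_nonpos (ht₀ b) (ht₁ b))
    have hh₀ := condEntropy_nonneg hp hq k ε
    have hh₁ : condEntropy p q k ε ≤ 1 := binEntropy_le_log_two.trans (by linarith [log_two_lt_d9])
    have hη := innovation_sq_le hp hq k (Fin.snoc ε b)
    rw [doobIncrement, stepInfo_snoc, Fin.init_snoc]
    nlinarith [sq_nonneg (-log (t b) - condEntropy p q k ε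
      - gain p q k N * innovation p q k (Fin.snoc ε b)), sq_nonneg (gain p q k N),
      mul_nonneg hW hh₀]
  have hlog (b : Bool) : t b * log (t b) ^ 2 ≤ 4 := mul_log_sq_le_four (ht₀ b) (ht₁ b)
  calc stepMean p q k (fun η => doobIncrement p q N k η ^ 2) ε
      ≤ ∑ b : Bool, t b * (2 * log (t b) ^ 2 + c) :=
        sum_le_sum fun b _ => mul_le_mul_of_nonneg_left (hpoint b) (ht₀ b)
    _ = 2 * (t false * log (t false) ^ 2 + t true * log (t true) ^ 2) + c := by
        have h : t true = 1 - t false := weight_true _ _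
        rw [Fintype.sum_bool]
        linear_combination c * h
    _ ≤ 18 + 8 * gain p q k N ^ 2 := by linarith [hlog true, hlog false]

lemma expect_sq_info_sub_le (N : ℕ) (hN : 1 ≤ N) :
    expect p q N (fun ε => (info p q N ε - expect p q N (info p q N)) ^ 2)
      ≤ N * (18 + 8 * (6 + 2 * log N) ^ 2) := by
  have hN' : (1 : ℝ) ≤ N := by exact_mod_cast hN
  have hgain (k : ℕ) : gain p q k N ^ 2 ≤ (6 + 2 * log N) ^ 2 :=
    sq_le_sq' (abs_le.1 (abs_gain_le hp hq k N hN)).1 (abs_le.1 (abs_gain_le hp hq k N hN)).2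
  calc _ = expect p q N (fun ε => prefixSum (doobIncrement p q N) N ε ^ 2) := by
        rw [prefixSum_doobIncrement]
    _ = ∑ k ∈ range N, expect p q (k + 1) (fun ε => doobIncrement p q N k ε ^ 2) :=
        expect_prefixSum_sq (doobIncrement_isMartingaleDiff N) N
    _ ≤ ∑ _k ∈ range N, (18 + 8 * (6 + 2 * log N) ^ 2) := sum_le_sum fun k _ =>
        expect_succ_le_of_stepMean_le hp hq fun ε =>
          (stepMean_doobIncrement_sq_le hp hq N k ε).trans (by linarith [hgain k])
    _ = N * (18 + 8 * (6 + 2 * log N) ^ 2) := by simp [mul_add]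

lemma expect_sq_info_sub_le_mul_sqrt (N : ℕ) (hN : 1 ≤ N) :
    expect p q N (fun ε => (info p q N ε - expect p q N (info p q N)) ^ 2) ≤ 1586 * (N * √N) := by
  have hN' : (1 : ℝ) ≤ N := by exact_mod_cast hN
  have hy : 1 ≤ (N : ℝ) ^ (1 / 4 : ℝ) := one_le_rpow hN' (by norm_num)
  have hlog : log N ≤ 4 * (N : ℝ) ^ (1 / 4 : ℝ) := by
    have := log_le_rpow_div (x := N) (by positivity) (by norm_num : (0 : ℝ) < 1 / 4)
    linarith [show (N : ℝ) ^ (1 / 4 : ℝ) / (1 / 4) = 4 * (N : ℝ) ^ (1 / 4 : ℝ) by ring]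
  have hsq : ((N : ℝ) ^ (1 / 4 : ℝ)) ^ 2 = √N := by
    rw [sqrt_eq_rpow, ← rpow_natCast, ← rpow_mul (by positivity)]
    norm_num
  have hlog_sq : (6 + 2 * log N) ^ 2 ≤ 196 * √N := by nlinarith [log_nonneg hN']
  have hs : 1 ≤ √(N : ℝ) := one_le_sqrt.2 hN'
  refine (expect_sq_info_sub_le hp hq N hN).trans ?_
  nlinarith

end Bounds

section Measure

variable {μ : Measure K}

lemma measurableSet_cyl {n : ℕ} (ε : Fin n → Bool) : MeasurableSet (cyl ε) := by
  rw [show cyl ε = ⋂ i : Fin n, (fun x : K => x i) ⁻¹' {ε i} by ext; simp [cyl]]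
  exact .iInter fun i => measurable_pi_apply (i : ℕ) (measurableSet_singleton _)

lemma measure_setOf_prefix_mem (N : ℕ) (S : Finset (Fin N → Bool)) :
    μ {x : K | (fun i : Fin N => x i) ∈ S} = ∑ ε ∈ S, μ (cyl ε) := by
  rw [← measure_biUnion_finset _ fun ε _ => measurableSet_cyl ε]
  · congr 1
    ext x
    simp only [Set.mem_ofPred_eq, Set.mem_iUnion, cyl, exists_prop]
    exact ⟨fun h => ⟨_, h, fun _ => rfl⟩,
      fun ⟨ε, hε, h⟩ => by rwa [show (fun i : Fin N => x i) = ε from funext h]⟩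
  · intro ε _ η _ hne
    refine Set.disjoint_left.2 fun x hx hy => hne (funext fun i => ?_)
    rw [← hx i, ← hy i]

lemma ae_measure_cylAt_ne_zero : ∀ᵐ x ∂μ, ∀ n, μ (cylAt x n) ≠ 0 := by
  classical
  refine ae_all_iff.2 fun n => ae_iff.2 ?_
  have hset : {x : K | ¬μ (cylAt x n) ≠ 0}
      = {x : K | (fun i : Fin n => x i) ∈ univ.filter fun ε => μ (cyl ε) = 0} := by
    simp [cylAt]
  rw [hset, measure_setOf_prefix_mem]
  exact sum_eq_zero fun ε hε => (mem_filter.1 hε).2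

/-- `hUpp μ` and `hLow μ` are, by definition, the `limsup` and `liminf` of `entropyRate μ`. -/
def entropyRate (μ : Measure K) (n : ℕ) : ℝ := (-1 / (n * log 2)) * entropySum μ n

variable [IsProbabilityMeasure μ] (hp : ∀ n, p n ∈ Set.Icc (0 : ℝ) 1)
  (hq : ∀ n, q n ∈ Set.Icc (0 : ℝ) 1) (hM : MarkovMeasure μ p q)
include hp hq hM

lemma measure_cyl {n : ℕ} (ε : Fin n → Bool) : μ (cyl ε) = ENNReal.ofReal (wordProb p q ε) := by
  induction n with
  | zero =>
    rw [show cyl ε = Set.univ from Set.eq_univ_of_forall fun _ i => i.elim0, measure_univ]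
    simp [wordProb]
  | succ n ih =>
    cases n with
    | zero =>
      obtain ⟨b, rfl⟩ : ∃ b, ε = ![b] := ⟨ε 0, by ext i; fin_cases i; rfl⟩
      show _ = ENNReal.ofReal (1 * weight (p 0, q 0) false b)
      cases b
      · simp [weight, hM.1]
      · simp [weight, hM.2.1]
    | succ n =>
      rw [← Fin.snoc_init_self ε, hM.2.2, ih, wordProb_snoc,
        ENNReal.ofReal_mul (wordProb_nonneg hp hq _)]
      rfl

lemma measure_le_expect_sq_div {N : ℕ} (g : (Fin N → Bool) → ℝ) {t : ℝ}
    (ht : 0 < t) : μ {x : K | t ≤ |g fun i : Fin N => x i|}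
      ≤ ENNReal.ofReal (expect p q N (fun ε => g ε ^ 2) / t ^ 2) := by
  classical
  have hset : {x : K | t ≤ |g fun i : Fin N => x i|}
      = {x : K | (fun i : Fin N => x i) ∈ univ.filter fun ε => t ≤ |g ε|} := by simp
  rw [hset, measure_setOf_prefix_mem, sum_congr rfl fun ε _ => measure_cyl hp hq hM ε,
    ← ENNReal.ofReal_sum_of_nonneg fun ε _ => wordProb_nonneg hp hq ε]
  refine ENNReal.ofReal_le_ofReal ?_
  rw [expect, sum_div]
  calc ∑ ε ∈ univ.filter fun ε => t ≤ |g ε|, wordProb p q ε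
      ≤ ∑ ε ∈ univ.filter fun ε => t ≤ |g ε|, wordProb p q ε * g ε ^ 2 / t ^ 2 := by
        refine sum_le_sum fun ε hε => ?_
        have h := pow_le_pow_left₀ ht.le (mem_filter.1 hε).2 2
        rw [sq_abs] at h
        rw [mul_div_assoc]
        exact le_mul_of_one_le_right (wordProb_nonneg hp hq ε) ((one_le_div (by positivity)).2 h)
    _ ≤ ∑ ε, wordProb p q ε * g ε ^ 2 / t ^ 2 :=
        sum_le_sum_of_subset_of_nonneg (filter_subset _ _) fun ε _ _ =>
          div_nonneg (mul_nonneg (wordProb_nonneg hp hq ε) (sq_nonneg _)) (sq_nonneg _)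

lemma toReal_measure_cyl {n : ℕ} (ε : Fin n → Bool) :
    (μ (cyl ε)).toReal = wordProb p q ε := by
  rw [measure_cyl hp hq hM, ENNReal.toReal_ofReal (wordProb_nonneg hp hq ε)]

lemma entropySum_eq_neg_expect_info (n : ℕ) :
    entropySum μ n = -expect p q n (info p q n) := by
  rw [entropySum, expect, ← sum_neg_distrib]
  refine sum_congr rfl fun ε _ => ?_
  rw [toReal_measure_cyl hp hq hM]
  by_cases h : wordProb p q ε = 0
  · simp [h]
  · rw [info_eq_neg_log_wordProb ε h]; ring

lemma neg_log_toReal_measure_cylAt {x : K} {n : ℕ}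
    (hx : μ (cylAt x n) ≠ 0) :
    -log (μ (cylAt x n)).toReal = info p q n (fun i : Fin n => x i) := by
  rw [cylAt, measure_cyl hp hq hM, ne_eq, ENNReal.ofReal_eq_zero, not_le] at hx
  rw [cylAt, toReal_measure_cyl hp hq hM, info_eq_neg_log_wordProb _ hx.ne']

lemma entropyRate_eq (n : ℕ) :
    entropyRate μ n = expect p q n (info p q n) / (n * log 2) := by
  rw [entropyRate, entropySum_eq_neg_expect_info hp hq hM]
  ring

lemma entropyRate_mem_Icc (n : ℕ) : entropyRate μ n ∈ Set.Icc (0 : ℝ) 1 := by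
  rw [entropyRate_eq hp hq hM]
  have := log_pos one_lt_two
  exact ⟨div_nonneg (expect_info_nonneg hp hq n) (by positivity),
    div_le_one_of_le₀ (expect_info_le hp hq n) (by positivity)⟩

/-- Chebyshev bounds the exceptional set by `Var / (n / (l + 1))² = O((l + 1)² / √n)`, which
is summable in `l` when `n ≥ (l + 1)⁸`. -/
lemma ae_eventually_abs_info_sub_lt {nl : ℕ → ℕ}
    (hnl : ∀ l, (l + 1) ^ 8 ≤ nl l) : ∀ᵐ x ∂μ, ∀ᶠ l in atTop,
      |info p q (nl l) (fun i => x i) - expect p q (nl l) (info p q (nl l))| < nl l / (l + 1) := by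
  have hbad (l : ℕ) : μ {x | (nl l : ℝ) / (l + 1) ≤
      |info p q (nl l) (fun i => x i) - expect p q (nl l) (info p q (nl l))|}
        ≤ ENNReal.ofReal (1586 / ((l : ℝ) + 1) ^ 2) := by
    have hN : ((l : ℝ) + 1) ^ 8 ≤ nl l := by exact_mod_cast hnl l
    have hN₁ : 1 ≤ nl l := le_trans (Nat.one_le_pow _ _ l.succ_pos) (hnl l)
    have hs : ((l : ℝ) + 1) ^ 4 ≤ √(nl l : ℝ) :=
      le_sqrt_of_sq_le (by rw [← pow_mul]; exact hN)
    have hsq := mul_self_sqrt (Nat.cast_nonneg (α := ℝ) (nl l))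
    have hV := expect_sq_info_sub_le_mul_sqrt hp hq (nl l) hN₁
    refine (measure_le_expect_sq_div hp hq hM
      (fun ε => info p q (nl l) ε - expect p q (nl l) (info p q (nl l)))
      (t := (nl l : ℝ) / (l + 1)) (by positivity)).trans (ENNReal.ofReal_le_ofReal ?_)
    rw [div_pow, div_div_eq_mul_div, div_le_div_iff₀ (by positivity) (by positivity)]
    calc _ = _ * ((l : ℝ) + 1) ^ 4 := by ring
      _ ≤ 1586 * (nl l * √(nl l : ℝ)) * √(nl l : ℝ) :=
        mul_le_mul hV hs (by positivity) (by positivity)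
      _ = _ := by rw [mul_assoc, mul_assoc, hsq]; ring
  have hsum : Summable fun l : ℕ => 1586 / ((l : ℝ) + 1) ^ 2 := by
    have := (summable_nat_add_iff 1).2 (Real.summable_one_div_nat_pow.2 one_lt_two)
    simpa [div_eq_mul_one_div (1586 : ℝ)] using this.mul_left 1586
  filter_upwards [ae_eventually_notMem (ne_top_of_le_ne_top hsum.tsum_ofReal_ne_top
    (ENNReal.tsum_le_tsum hbad))] with x hx
  exact hx.mono fun l hl => not_le.1 hl

theorem exists_strictMono_ae_tendsto {L : ℝ}
    (hL : MapClusterPt L atTop (entropyRate μ)) : ∃ nl : ℕ → ℕ, StrictMono nl ∧ ∀ᵐ x ∂μ,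
      Tendsto (fun l => (-1 / ((nl l : ℝ) * log 2)) * log (μ (cylAt x (nl l))).toReal)
        atTop (𝓝 L) := by
  have hfreq (l : ℕ) : ∃ᶠ n in atTop, (l + 1) ^ 8 ≤ n ∧ |entropyRate μ n - L| < 1 / (l + 1) :=
    ((mapClusterPt_iff_frequently.1 hL _ (Metric.ball_mem_nhds L (by positivity))).and_eventually
      (eventually_ge_atTop _)).mono fun _ h => ⟨h.2, h.1⟩
  obtain ⟨nl, hmono, hnl⟩ := extraction_forall_of_frequently hfreq
  refine ⟨nl, hmono, ?_⟩
  filter_upwards [ae_eventually_abs_info_sub_lt hp hq hM fun l => (hnl l).1,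
    ae_measure_cylAt_ne_zero] with x hx hpos
  have hlog2 := log_pos one_lt_two
  rw [← tendsto_sub_nhds_zero_iff]
  refine squeeze_zero_norm' (a := fun l : ℕ => (1 / log 2 + 1) * (1 / ((l : ℝ) + 1))) ?_ ?_
  · filter_upwards [hx] with l hl
    have hn : (0 : ℝ) < nl l := by
      exact_mod_cast (Nat.one_le_pow _ _ l.succ_pos).trans (hnl l).1
    have hrate := (hnl l).2
    rw [entropyRate_eq hp hq hM] at hrate
    have hlogμ : log (μ (cylAt x (nl l))).toReal = -info p q (nl l) fun i => x i := by
      rw [← neg_log_toReal_measure_cylAt hp hq hM (hpos _), neg_neg]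
    set I := info p q (nl l) fun i => x i
    set E := expect p q (nl l) (info p q (nl l))
    have hdev : |(I - E) / (nl l * log 2)| ≤ 1 / log 2 * (1 / (l + 1)) := by
      rw [abs_div, abs_of_pos (a := (nl l : ℝ) * log 2) (by positivity),
        div_le_iff₀ (by positivity)]
      calc |I - E| ≤ nl l / (l + 1) := hl.le
        _ = _ := by field_simp
    calc ‖(-1 / (nl l * log 2)) * log (μ (cylAt x (nl l))).toReal - L‖
        = |(I - E) / (nl l * log 2) + (E / (nl l * log 2) - L)| := by
          rw [norm_eq_abs, hlogμ]; ring_nf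
      _ ≤ _ := (abs_add_le _ _).trans (by linarith)
  · simpa using tendsto_one_div_add_atTop_nhds_zero_nat.const_mul (1 / log 2 + 1)

end Measure

end Markov

/-- If `μ` satisfies the non-homogeneous Markov property (M), then there are strictly
increasing sequences `(n_l)` and `(m_l)` of natural numbers such that, `μ`-almost
everywhere, `(-1/(n_l log 2)) log μ(I_{n_l}(x)) → h^*(μ)` and
`(-1/(m_l log 2)) log μ(I_{m_l}(x)) → h_*(μ)`. -/
theorem markov_subsequences_to_entropies
    (μ : Measure K) [IsProbabilityMeasure μ] (p q : ℕ → ℝ)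
    (hp : ∀ n, p n ∈ Set.Icc (0 : ℝ) 1) (hq : ∀ n, q n ∈ Set.Icc (0 : ℝ) 1)
    (hM : MarkovMeasure μ p q) :
    (∃ nl : ℕ → ℕ, StrictMono nl ∧ ∀ᵐ x ∂μ,
      Tendsto (fun l : ℕ =>
          (-1 / ((nl l : ℝ) * Real.log 2)) * Real.log (μ (cylAt x (nl l))).toReal)
        atTop (𝓝 (hUpp μ))) ∧
    (∃ ml : ℕ → ℕ, StrictMono ml ∧ ∀ᵐ x ∂μ,
      Tendsto (fun l : ℕ =>
          (-1 / ((ml l : ℝ) * Real.log 2)) * Real.log (μ (cylAt x (ml l))).toReal)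
        atTop (𝓝 (hLow μ))) := by
  have hrate := Markov.entropyRate_mem_Icc hp hq hM
  have hle : IsBoundedUnder (· ≤ ·) atTop (Markov.entropyRate μ) :=
    isBoundedUnder_of ⟨1, fun n => (hrate n).2⟩
  have hge : IsBoundedUnder (· ≥ ·) atTop (Markov.entropyRate μ) :=
    isBoundedUnder_of ⟨0, fun n => (hrate n).1⟩
  exact ⟨Markov.exists_strictMono_ae_tendsto hp hq hM (.limsup hge.isCoboundedUnder_le hle),
    Markov.exists_strictMono_ae_tendsto hp hq hM (.liminf hle.isCoboundedUnder_ge hge)⟩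
end
end

section
/- Let μ be a Borel probability measure on the dyadic Cantor set 𝕂 satisfying the non-homogeneous Markov property (M) with all p_n, q_n ∈ (0,1). There is a positive function η on ℕ with η(k) → 0 as k → ∞, not depending on n (one may take η(k) = e² log 2 / (k + 1)), such that for all n, k ≥ 1 and any two cylinders I, I′ ∈ ℱ_n of the same generation: (1/k) | Σ_{K∈ℱ_k} log(μ(IK)/μ(I)) · μ(IK)/μ(I) − Σ_{K∈ℱ_k} log(μ(I′K)/μ(I′)) · μ(I′K)/μ(I′) | < η(k). -/
open MeasureTheory Filter Topology
open scoped ENNReal NNReal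

noncomputable section

/-! ### Auxiliary material for the proof -/

section AuxAnalytic

lemma sqrt_le_one' {s : ℝ} (hs1 : s ≤ 1) : Real.sqrt s ≤ 1 := by
  rw [show (1:ℝ) = Real.sqrt 1 by simp]
  exact Real.sqrt_le_sqrt hs1

/-- `-(x log x) ≤ 2 √x` on `[0,∞)`. -/
lemma neg_mul_log_le_two_sqrt {y : ℝ} (hy0 : 0 ≤ y) :
    -(y * Real.log y) ≤ 2 * Real.sqrt y := by
  rcases eq_or_lt_of_le hy0 with h | h
  · simp [← h]
  · have hs : 0 < Real.sqrt y := Real.sqrt_pos.2 h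
    have hlog : Real.log (1 / Real.sqrt y) ≤ 1 / Real.sqrt y - 1 :=
      Real.log_le_sub_one_of_pos (by positivity)
    have h1 : Real.log (1 / Real.sqrt y) = -(Real.log y / 2) := by
      rw [one_div, Real.log_inv, Real.log_sqrt hy0]
    have hq : 2 * (1 / Real.sqrt y) = 2 / Real.sqrt y := by ring
    have h2 : -Real.log y ≤ 2 / Real.sqrt y := by
      rw [h1] at hlog
      linarith [hlog, hq]
    calc -(y * Real.log y) = y * (-Real.log y) := by ring
      _ ≤ y * (2 / Real.sqrt y) := mul_le_mul_of_nonneg_left h2 hy0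
      _ = 2 * (y / Real.sqrt y) := by ring
      _ = 2 * Real.sqrt y := by rw [Real.div_sqrt]

/-- `-(x log x) ≤ 1 - x` on `[0,∞)`. -/
lemma neg_mul_log_le_one_sub {x : ℝ} (hx0 : 0 ≤ x) :
    -(x * Real.log x) ≤ 1 - x := by
  rcases eq_or_lt_of_le hx0 with h | h
  · simp [← h]
  · have hlog : Real.log (1 / x) ≤ 1 / x - 1 :=
      Real.log_le_sub_one_of_pos (by positivity)
    rw [one_div, Real.log_inv] at hlog
    calc -(x * Real.log x) = x * (-Real.log x) := by ring
      _ ≤ x * (x⁻¹ - 1) := mul_le_mul_of_nonneg_left hlog hx0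
      _ = 1 - x := by field_simp

lemma neg_mul_log_nonneg {x : ℝ} (hx0 : 0 ≤ x) (hx1 : x ≤ 1) :
    0 ≤ -(x * Real.log x) := by
  have := Real.log_nonpos hx0 hx1
  nlinarith

/-- `|θ x - θ y| ≤ 2 √(1 - |x - y|)` for `θ t = -(t log t)` on `[0,1]`. -/
lemma theta_diff_le {x y : ℝ} (hx0 : 0 ≤ x) (hx1 : x ≤ 1) (hy0 : 0 ≤ y) (hy1 : y ≤ 1) :
    |(-(x * Real.log x)) - (-(y * Real.log y))| ≤ 2 * Real.sqrt (1 - |x - y|) := by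
  rcases le_total y x with hyx | hxy
  · have habs : |x - y| = x - y := abs_of_nonneg (by linarith)
    rw [habs]
    set s : ℝ := 1 - (x - y) with hs
    have hs0 : 0 ≤ s := by simp only [hs]; linarith
    have hys : y ≤ s := by simp only [hs]; linarith
    have hθy : -(y * Real.log y) ≤ 2 * Real.sqrt s :=
      (neg_mul_log_le_two_sqrt hy0).trans
        (by have := Real.sqrt_le_sqrt hys; linarith)
    have hθx : -(x * Real.log x) ≤ 2 * Real.sqrt s := by
      have h1 : -(x * Real.log x) ≤ 1 - x := neg_mul_log_le_one_sub hx0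
      have h2 : (1 : ℝ) - x ≤ s := by simp only [hs]; linarith
      have h3 : s ≤ Real.sqrt s := by
        nlinarith [Real.sq_sqrt hs0, Real.sqrt_nonneg s, sqrt_le_one' (by linarith : s ≤ 1)]
      have h4 : (0:ℝ) ≤ Real.sqrt s := Real.sqrt_nonneg s
      linarith
    have hny : 0 ≤ -(y * Real.log y) := neg_mul_log_nonneg hy0 hy1
    have hnx : 0 ≤ -(x * Real.log x) := neg_mul_log_nonneg hx0 hx1
    rw [abs_sub_le_iff]
    constructor <;> linarith
  · have habs : |x - y| = y - x := by rw [abs_sub_comm]; exact abs_of_nonneg (by linarith)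
    rw [habs]
    set s : ℝ := 1 - (y - x) with hs
    have hs0 : 0 ≤ s := by simp only [hs]; linarith
    have hys : x ≤ s := by simp only [hs]; linarith
    have hθy : -(x * Real.log x) ≤ 2 * Real.sqrt s :=
      (neg_mul_log_le_two_sqrt hx0).trans
        (by have := Real.sqrt_le_sqrt hys; linarith)
    have hθx : -(y * Real.log y) ≤ 2 * Real.sqrt s := by
      have h1 : -(y * Real.log y) ≤ 1 - y := neg_mul_log_le_one_sub hy0
      have h2 : (1 : ℝ) - y ≤ s := by simp only [hs]; linarith
      have h3 : s ≤ Real.sqrt s := by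
        nlinarith [Real.sq_sqrt hs0, Real.sqrt_nonneg s, sqrt_le_one' (by linarith : s ≤ 1)]
      have h4 : (0:ℝ) ≤ Real.sqrt s := Real.sqrt_nonneg s
      linarith
    have hny : 0 ≤ -(y * Real.log y) := neg_mul_log_nonneg hy0 hy1
    have hnx : 0 ≤ -(x * Real.log x) := neg_mul_log_nonneg hx0 hx1
    rw [abs_sub_le_iff]
    constructor <;> linarith

/-- Difference of binary entropies. -/
lemma entropy_diff_le {P Q : ℝ} (hP : P ∈ Set.Ioo (0:ℝ) 1) (hQ : Q ∈ Set.Ioo (0:ℝ) 1) :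
    |(P * Real.log P + (1 - P) * Real.log (1 - P))
      - (Q * Real.log Q + (1 - Q) * Real.log (1 - Q))|
      ≤ 4 * Real.sqrt (1 - |P - Q|) := by
  obtain ⟨hP0, hP1⟩ := hP
  obtain ⟨hQ0, hQ1⟩ := hQ
  have h1 := theta_diff_le (x := P) (y := Q) hP0.le hP1.le hQ0.le hQ1.le
  have h2' := theta_diff_le (x := 1 - P) (y := 1 - Q) (by linarith) (by linarith)
    (by linarith) (by linarith)
  have habs : |(1 - P) - ((1:ℝ) - Q)| = |P - Q| := by
    rw [show (1 - P) - ((1:ℝ) - Q) = -(P - Q) by ring, abs_neg]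
  rw [habs] at h2'
  have e1 : (P * Real.log P + (1 - P) * Real.log (1 - P))
      - (Q * Real.log Q + (1 - Q) * Real.log (1 - Q))
      = ((-(Q * Real.log Q)) - (-(P * Real.log P)))
        + ((-((1-Q) * Real.log (1-Q))) - (-((1-P) * Real.log (1-P)))) := by ring
  have h1c : |(-(Q * Real.log Q)) - (-(P * Real.log P))|
      = |(-(P * Real.log P)) - (-(Q * Real.log Q))| := abs_sub_comm _ _
  have h2c : |(-((1-Q) * Real.log (1-Q))) - (-((1-P) * Real.log (1-P)))|
      = |(-((1-P) * Real.log (1-P))) - (-((1-Q) * Real.log (1-Q)))| := abs_sub_comm _ _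
  calc |(P * Real.log P + (1 - P) * Real.log (1 - P))
      - (Q * Real.log Q + (1 - Q) * Real.log (1 - Q))|
      = |((-(Q * Real.log Q)) - (-(P * Real.log P)))
        + ((-((1-Q) * Real.log (1-Q))) - (-((1-P) * Real.log (1-P))))| := by rw [e1]
    _ ≤ |(-(Q * Real.log Q)) - (-(P * Real.log P))|
        + |(-((1-Q) * Real.log (1-Q))) - (-((1-P) * Real.log (1-P)))| := abs_add_le _ _
    _ ≤ 4 * Real.sqrt (1 - |P - Q|) := by linarith [h1, h2', h1c, h2c]

/-- The key elementary inequality for the induction: `4√s + (1-s)·4√k ≤ 4√(k+1)`. -/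
lemma key_sqrt_ineq (k : ℕ) {s : ℝ} (hs0 : 0 ≤ s) (hs1 : s ≤ 1) :
    4 * Real.sqrt s + (1 - s) * (4 * Real.sqrt k) ≤ 4 * Real.sqrt ((k : ℝ) + 1) := by
  rcases Nat.eq_zero_or_pos k with rfl | hk
  · simp only [Nat.cast_zero, Real.sqrt_zero, mul_zero, add_zero, zero_add]
    have h1 : Real.sqrt s ≤ 1 := sqrt_le_one' hs1
    rw [Real.sqrt_one]; linarith
  · set u : ℝ := Real.sqrt s with hu
    set a : ℝ := Real.sqrt k with ha
    set b : ℝ := Real.sqrt ((k:ℝ) + 1) with hb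
    have hu0 : 0 ≤ u := Real.sqrt_nonneg _
    have hu1 : u ≤ 1 := sqrt_le_one' hs1
    have hu2 : u ^ 2 = s := Real.sq_sqrt hs0
    have ha2 : a ^ 2 = (k : ℝ) := Real.sq_sqrt (by positivity)
    have hb2 : b ^ 2 = (k : ℝ) + 1 := Real.sq_sqrt (by positivity)
    have ha1 : 1 ≤ a := by
      rw [ha, show (1:ℝ) = Real.sqrt 1 by simp]
      exact Real.sqrt_le_sqrt (by exact_mod_cast hk)
    have hb0 : 0 ≤ b := Real.sqrt_nonneg _
    have hba : a ≤ b := Real.sqrt_le_sqrt (by linarith)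
    have hab1 : (b - a) * (b + a) = 1 := by nlinarith
    have h3ab : b ≤ 3 * a := by nlinarith
    have hb4 : 1 ≤ 4 * a * (b - a) := by
      nlinarith [mul_nonneg (sub_nonneg.2 hba) (sub_nonneg.2 h3ab)]
    have hgoal : u + a - u ^ 2 * a ≤ b := by
      nlinarith [sq_nonneg (2 * a * u - 1), ha1, hu0, hu1]
    calc 4 * u + (1 - s) * (4 * a) = 4 * (u + a - u ^ 2 * a) := by rw [hu2]; ring
      _ ≤ 4 * b := by linarith

end AuxAnalytic
section AuxMarkov

/-- The conditional entropy sum over `k` further generations, started at generation `n`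
with last letter `e`, for the Markov weights given by `p, q`. -/
def G (p q : ℕ → ℝ) : ℕ → ℕ → Bool → ℝ
  | 0, _, _ => 0
  | (k+1), n, e => ∑ b : Bool,
      weight (p n, q n) e b * (Real.log (weight (p n, q n) e b) + G p q k (n+1) b)

lemma weight_mem_Ioo {P Q : ℝ} (hP : P ∈ Set.Ioo (0:ℝ) 1) (hQ : Q ∈ Set.Ioo (0:ℝ) 1)
    (e b : Bool) : weight (P, Q) e b ∈ Set.Ioo (0:ℝ) 1 := by
  obtain ⟨hP0, hP1⟩ := hP
  obtain ⟨hQ0, hQ1⟩ := hQ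
  cases e <;> cases b <;> rw [Set.mem_Ioo] <;> refine ⟨?_, ?_⟩ <;>
    simp [weight] <;> linarith

lemma weight_sum {P Q : ℝ} (e : Bool) :
    weight (P, Q) e false + weight (P, Q) e true = 1 := by
  cases e <;> simp [weight]

/-- The uniform bound `|G k n false - G k n true| ≤ 4 √k`. -/
lemma G_diff_le (p q : ℕ → ℝ) (hp : ∀ n, p n ∈ Set.Ioo (0 : ℝ) 1)
    (hq : ∀ n, q n ∈ Set.Ioo (0 : ℝ) 1) :
    ∀ (k n : ℕ), |G p q k n false - G p q k n true| ≤ 4 * Real.sqrt k := by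
  intro k
  induction k with
  | zero => intro n; simp [G]
  | succ k ih =>
    intro n
    obtain ⟨hp0, hp1⟩ := hp n
    obtain ⟨hq0, hq1⟩ := hq n
    set P := p n
    set Q := q n
    set Gf := G p q k (n+1) false with hGf
    set Gt := G p q k (n+1) true with hGt
    have hrec : G p q (k+1) n false - G p q (k+1) n true
        = ((P * Real.log P + (1 - P) * Real.log (1 - P))
            - (Q * Real.log Q + (1 - Q) * Real.log (1 - Q)))
          + (P - Q) * (Gf - Gt) := by
      simp [G, Fintype.sum_bool, weight]
      ring
    have hPQ1 : |P - Q| < 1 := by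
      rw [abs_lt]; constructor <;> linarith
    have hPQ0 : 0 ≤ |P - Q| := abs_nonneg _
    have hent := entropy_diff_le ⟨hp0, hp1⟩ ⟨hq0, hq1⟩
    have hih := ih (n+1)
    have step : |G p q (k+1) n false - G p q (k+1) n true|
        ≤ 4 * Real.sqrt (1 - |P - Q|) + (1 - (1 - |P - Q|)) * (4 * Real.sqrt k) := by
      rw [hrec]
      refine (abs_add_le _ _).trans ?_
      rw [abs_mul]
      have : |P - Q| * |Gf - Gt| ≤ |P - Q| * (4 * Real.sqrt k) :=
        mul_le_mul_of_nonneg_left hih hPQ0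
      have h' : (1 - (1 - |P - Q|)) = |P - Q| := by ring
      rw [h']
      exact add_le_add hent this
    refine step.trans ?_
    have hk := key_sqrt_ineq k (s := 1 - |P - Q|) (by linarith) (by linarith)
    have hcast : (((k+1) : ℕ) : ℝ) = (k : ℝ) + 1 := by push_cast; ring
    rw [hcast]
    exact hk

end AuxMarkov
section AuxCyl

lemma cyl_comp_cast {a b : ℕ} (h : b = a) (ε : Fin a → Bool) :
    cyl (ε ∘ Fin.cast h) = cyl ε := by
  ext x
  simp only [cyl, Set.mem_setOf_eq, Function.comp_apply]
  constructor
  · intro hx i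
    have := hx (Fin.cast h.symm i)
    simpa using this
  · intro hx i
    have := hx (Fin.cast h i)
    simpa using this

lemma cyl_zero (ε : Fin 0 → Bool) : cyl ε = Set.univ := by
  ext x
  exact ⟨fun _ => trivial, fun _ i => i.elim0⟩

lemma cyl_append_nil {n : ℕ} (ε : Fin n → Bool) (κ : Fin 0 → Bool) :
    cyl (Fin.append ε κ) = cyl ε := by
  have hκ : κ = Fin.elim0 := funext fun i => i.elim0
  rw [hκ, Fin.append_elim0, cyl_comp_cast]

lemma cyl_append_cons {n k : ℕ} (ε : Fin n → Bool) (b : Bool) (κ : Fin k → Bool) :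
    cyl (Fin.append ε (Fin.cons b κ)) = cyl (Fin.append (Fin.snoc ε b) κ) := by
  rw [Fin.append_right_cons, cyl_comp_cast]

end AuxCyl

section AuxMeasure

variable {μ : Measure K} {p q : ℕ → ℝ}

lemma cyl_pos [IsProbabilityMeasure μ] (hp : ∀ n, p n ∈ Set.Ioo (0 : ℝ) 1)
    (hq : ∀ n, q n ∈ Set.Ioo (0 : ℝ) 1) (hM : MarkovMeasure μ p q) :
    ∀ {n : ℕ} (ε : Fin n → Bool), 0 < μ (cyl ε) := by
  intro n
  induction n with
  | zero =>
    intro ε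
    rw [cyl_zero]
    simp
  | succ m ih =>
    cases m with
    | zero =>
      intro ε
      cases hb : ε 0 with
      | false =>
        have hε : ε = ![false] := funext fun i => by
          have h0 : i = 0 := Fin.fin_one_eq_zero i
          subst h0
          simpa using hb
        rw [hε, hM.1]
        exact ENNReal.ofReal_pos.2 (hp 0).1
      | true =>
        have hε : ε = ![true] := funext fun i => by
          have h0 : i = 0 := Fin.fin_one_eq_zero i
          subst h0
          simpa using hb
        rw [hε, hM.2.1]
        have := (hp 0).2
        exact ENNReal.ofReal_pos.2 (by linarith)
    | succ m' =>
      intro ε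
      rw [← Fin.snoc_init_self ε, hM.2.2 m' (Fin.init ε) (ε (Fin.last (m'+1)))]
      have h1 := ih (Fin.init ε)
      have h2 : 0 < weight (p (m'+1), q (m'+1)) ((Fin.init ε) (Fin.last m'))
          (ε (Fin.last (m'+1))) := (weight_mem_Ioo (hp _) (hq _) _ _).1
      exact ENNReal.mul_pos h1.ne' (ENNReal.ofReal_pos.2 h2).ne'

lemma cyl_toReal_pos [IsProbabilityMeasure μ] (hp : ∀ n, p n ∈ Set.Ioo (0 : ℝ) 1)
    (hq : ∀ n, q n ∈ Set.Ioo (0 : ℝ) 1) (hM : MarkovMeasure μ p q)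
    {n : ℕ} (ε : Fin n → Bool) : 0 < (μ (cyl ε)).toReal :=
  ENNReal.toReal_pos (cyl_pos hp hq hM ε).ne' (measure_ne_top μ _)

lemma toReal_snoc (hp : ∀ n, p n ∈ Set.Ioo (0 : ℝ) 1)
    (hq : ∀ n, q n ∈ Set.Ioo (0 : ℝ) 1) (hM : MarkovMeasure μ p q)
    {m : ℕ} (ε : Fin (m+1) → Bool) (b : Bool) :
    (μ (cyl (Fin.snoc ε b))).toReal
      = (μ (cyl ε)).toReal * weight (p (m+1), q (m+1)) (ε (Fin.last m)) b := by
  rw [hM.2.2 m ε b, ENNReal.toReal_mul,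
    ENNReal.toReal_ofReal (weight_mem_Ioo (hp _) (hq _) _ _).1.le]

lemma sum_toReal_append [IsProbabilityMeasure μ] (hp : ∀ n, p n ∈ Set.Ioo (0 : ℝ) 1)
    (hq : ∀ n, q n ∈ Set.Ioo (0 : ℝ) 1) (hM : MarkovMeasure μ p q) :
    ∀ (k : ℕ) {m : ℕ} (τ : Fin (m+1) → Bool),
      ∑ κ : Fin k → Bool, (μ (cyl (Fin.append τ κ))).toReal = (μ (cyl τ)).toReal := by
  intro k
  induction k with
  | zero =>
    intro m τ
    rw [Fintype.sum_unique, cyl_append_nil]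
  | succ k ih =>
    intro m τ
    have hsplit : ∑ κ : Fin (k+1) → Bool, (μ (cyl (Fin.append τ κ))).toReal
        = ∑ y : Bool × (Fin k → Bool),
            (μ (cyl (Fin.append τ (Fin.cons y.1 y.2)))).toReal := by
      rw [← (Fin.consEquiv (fun _ : Fin (k+1) => Bool)).sum_comp
          (fun κ => (μ (cyl (Fin.append τ κ))).toReal)]
      rfl
    rw [hsplit, Fintype.sum_prod_type]
    have hstep : ∀ b : Bool,
        ∑ κ : Fin k → Bool, (μ (cyl (Fin.append τ (Fin.cons b κ)))).toReal
          = (μ (cyl (Fin.snoc τ b))).toReal := by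
      intro b
      calc ∑ κ : Fin k → Bool, (μ (cyl (Fin.append τ (Fin.cons b κ)))).toReal
          = ∑ κ : Fin k → Bool, (μ (cyl (Fin.append (Fin.snoc τ b) κ))).toReal :=
            Finset.sum_congr rfl fun κ _ => by rw [cyl_append_cons]
        _ = (μ (cyl (Fin.snoc τ b))).toReal := ih (Fin.snoc τ b)
    rw [Finset.sum_congr rfl fun b _ => hstep b]
    rw [Fintype.sum_bool, toReal_snoc hp hq hM, toReal_snoc hp hq hM]
    have hw := weight_sum (P := p (m+1)) (Q := q (m+1)) (e := τ (Fin.last m))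
    linear_combination (μ (cyl τ)).toReal * hw

lemma sum_log_eq_G [IsProbabilityMeasure μ] (hp : ∀ n, p n ∈ Set.Ioo (0 : ℝ) 1)
    (hq : ∀ n, q n ∈ Set.Ioo (0 : ℝ) 1) (hM : MarkovMeasure μ p q) :
    ∀ (k : ℕ) {m : ℕ} (ε : Fin (m+1) → Bool),
      (∑ κ : Fin k → Bool,
        Real.log ((μ (cyl (Fin.append ε κ))).toReal / (μ (cyl ε)).toReal) *
          ((μ (cyl (Fin.append ε κ))).toReal / (μ (cyl ε)).toReal))
      = G p q k (m+1) (ε (Fin.last m)) := by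
  intro k
  induction k with
  | zero =>
    intro m ε
    rw [Fintype.sum_unique, cyl_append_nil,
      div_self (cyl_toReal_pos hp hq hM ε).ne']
    simp [G]
  | succ k ih =>
    intro m ε
    have hT0 : 0 < (μ (cyl ε)).toReal := cyl_toReal_pos hp hq hM ε
    have hsplit : (∑ κ : Fin (k+1) → Bool,
          Real.log ((μ (cyl (Fin.append ε κ))).toReal / (μ (cyl ε)).toReal) *
            ((μ (cyl (Fin.append ε κ))).toReal / (μ (cyl ε)).toReal))
        = ∑ y : Bool × (Fin k → Bool),
            Real.log ((μ (cyl (Fin.append ε (Fin.cons y.1 y.2)))).toReal / (μ (cyl ε)).toReal) *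
              ((μ (cyl (Fin.append ε (Fin.cons y.1 y.2)))).toReal / (μ (cyl ε)).toReal) := by
      rw [← (Fin.consEquiv (fun _ : Fin (k+1) => Bool)).sum_comp
          (fun κ => Real.log ((μ (cyl (Fin.append ε κ))).toReal / (μ (cyl ε)).toReal) *
            ((μ (cyl (Fin.append ε κ))).toReal / (μ (cyl ε)).toReal))]
      rfl
    rw [hsplit, Fintype.sum_prod_type]
    have hstep : ∀ b : Bool,
        (∑ κ : Fin k → Bool,
          Real.log ((μ (cyl (Fin.append ε (Fin.cons b κ)))).toReal / (μ (cyl ε)).toReal) *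
            ((μ (cyl (Fin.append ε (Fin.cons b κ)))).toReal / (μ (cyl ε)).toReal))
        = weight (p (m+1), q (m+1)) (ε (Fin.last m)) b *
            (Real.log (weight (p (m+1), q (m+1)) (ε (Fin.last m)) b) + G p q k (m+2) b) := by
      intro b
      set w := weight (p (m+1), q (m+1)) (ε (Fin.last m)) b with hwdef
      have hw : w ∈ Set.Ioo (0:ℝ) 1 := weight_mem_Ioo (hp _) (hq _) _ _
      have hTs : (μ (cyl (Fin.snoc ε b))).toReal = (μ (cyl ε)).toReal * w :=
        toReal_snoc hp hq hM ε b
      have hTs0 : 0 < (μ (cyl (Fin.snoc ε b))).toReal := cyl_toReal_pos hp hq hM _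
      have hterm : ∀ κ : Fin k → Bool,
          Real.log ((μ (cyl (Fin.append ε (Fin.cons b κ)))).toReal / (μ (cyl ε)).toReal) *
            ((μ (cyl (Fin.append ε (Fin.cons b κ)))).toReal / (μ (cyl ε)).toReal)
          = w * (Real.log w *
              ((μ (cyl (Fin.append (Fin.snoc ε b) κ))).toReal / (μ (cyl (Fin.snoc ε b))).toReal))
            + w * (Real.log ((μ (cyl (Fin.append (Fin.snoc ε b) κ))).toReal /
                  (μ (cyl (Fin.snoc ε b))).toReal) *
                ((μ (cyl (Fin.append (Fin.snoc ε b) κ))).toReal /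
                  (μ (cyl (Fin.snoc ε b))).toReal)) := by
        intro κ
        have hA0 : 0 < (μ (cyl (Fin.append (Fin.snoc ε b) κ))).toReal :=
          cyl_toReal_pos hp hq hM _
        have hρ0 : 0 < (μ (cyl (Fin.append (Fin.snoc ε b) κ))).toReal /
            (μ (cyl (Fin.snoc ε b))).toReal := div_pos hA0 hTs0
        have hratio : (μ (cyl (Fin.append (Fin.snoc ε b) κ))).toReal / (μ (cyl ε)).toReal
            = w * ((μ (cyl (Fin.append (Fin.snoc ε b) κ))).toReal /
                (μ (cyl (Fin.snoc ε b))).toReal) := by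
          have hw0 : w ≠ 0 := hw.1.ne'
          rw [hTs]
          field_simp
        rw [cyl_append_cons, hratio, Real.log_mul hw.1.ne' hρ0.ne']
        ring
      rw [Finset.sum_congr rfl fun κ _ => hterm κ]
      rw [Finset.sum_add_distrib, ← Finset.mul_sum, ← Finset.mul_sum, ← Finset.mul_sum]
      have hsum1 : (∑ κ : Fin k → Bool,
          (μ (cyl (Fin.append (Fin.snoc ε b) κ))).toReal / (μ (cyl (Fin.snoc ε b))).toReal) = 1 := by
        rw [← Finset.sum_div, sum_toReal_append hp hq hM k (Fin.snoc ε b),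
          div_self hTs0.ne']
      have hsum2 : (∑ κ : Fin k → Bool,
          Real.log ((μ (cyl (Fin.append (Fin.snoc ε b) κ))).toReal /
              (μ (cyl (Fin.snoc ε b))).toReal) *
            ((μ (cyl (Fin.append (Fin.snoc ε b) κ))).toReal /
              (μ (cyl (Fin.snoc ε b))).toReal)) = G p q k (m+2) b := by
        have := ih (Fin.snoc ε b)
        rw [Fin.snoc_last] at this
        exact this
      rw [hsum1, hsum2]
      ring
    rw [Finset.sum_congr rfl fun b _ => hstep b]
    simp [G]

end AuxMeasure
/-- **Proposition (uniform comparison of conditional entropies).** For a non-homogeneous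
Markov measure `μ` with weights in `(0,1)`, there is a positive function `η` on `ℕ` with
`η(k) → 0` as `k → ∞`, not depending on `n` (one may take `η(k) = e² log 2/(k+1)`), such
that for all `n, k ≥ 1` and any two cylinders `I, I' ∈ ℱ_n`:
`(1/k) |Σ_{K ∈ ℱ_k} log(μ(IK)/μ(I)) μ(IK)/μ(I)
       - Σ_{K ∈ ℱ_k} log(μ(I'K)/μ(I')) μ(I'K)/μ(I')| < η(k)`. -/
theorem markov_conditional_entropy_comparison
    (μ : Measure K) [IsProbabilityMeasure μ] (p q : ℕ → ℝ)
    (hp : ∀ n, p n ∈ Set.Ioo (0 : ℝ) 1) (hq : ∀ n, q n ∈ Set.Ioo (0 : ℝ) 1)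
    (hM : MarkovMeasure μ p q) :
    ∃ η : ℕ → ℝ, (∀ k, 0 < η k) ∧ Tendsto η atTop (𝓝 0) ∧
      ∀ (n k : ℕ), 1 ≤ n → 1 ≤ k → ∀ ε ε' : Fin n → Bool,
        (1 / (k : ℝ)) *
          |(∑ κ : Fin k → Bool,
              Real.log ((μ (cyl (Fin.append ε κ))).toReal / (μ (cyl ε)).toReal) *
                ((μ (cyl (Fin.append ε κ))).toReal / (μ (cyl ε)).toReal))
            -
            ∑ κ : Fin k → Bool,
              Real.log ((μ (cyl (Fin.append ε' κ))).toReal / (μ (cyl ε')).toReal) *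
                ((μ (cyl (Fin.append ε' κ))).toReal / (μ (cyl ε')).toReal)|
          < η k := by
  refine ⟨fun k => 6 / Real.sqrt ((k : ℝ) + 1), fun k => by positivity, ?_, ?_⟩
  · -- Tendsto
    have h1 : Tendsto (fun k : ℕ => Real.sqrt ((k : ℝ) + 1)) atTop atTop := by
      rw [Filter.tendsto_atTop_atTop]
      intro c
      refine ⟨⌈c * c⌉₊, fun n hn => ?_⟩
      rcases le_or_gt c 0 with hc | hc
      · exact hc.trans (Real.sqrt_nonneg _)
      · have h2 : c * c ≤ (n : ℝ) + 1 := by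
          have := Nat.le_ceil (c * c)
          have hcast : ((⌈c * c⌉₊ : ℕ) : ℝ) ≤ (n : ℝ) := Nat.cast_le.2 hn
          linarith
        calc c = Real.sqrt (c * c) := (Real.sqrt_mul_self hc.le).symm
          _ ≤ Real.sqrt ((n : ℝ) + 1) := Real.sqrt_le_sqrt h2
    exact Filter.Tendsto.div_atTop tendsto_const_nhds h1
  · intro n k hn hk ε ε'
    obtain ⟨m, rfl⟩ : ∃ m, n = m + 1 := ⟨n - 1, by omega⟩
    rw [sum_log_eq_G hp hq hM k ε, sum_log_eq_G hp hq hM k ε']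
    have hdiff : |G p q k (m+1) (ε (Fin.last m)) - G p q k (m+1) (ε' (Fin.last m))|
        ≤ 4 * Real.sqrt (k : ℝ) := by
      have h4 : (0:ℝ) ≤ 4 * Real.sqrt (k : ℝ) := by positivity
      cases hε : ε (Fin.last m) <;> cases hε' : ε' (Fin.last m)
      · simpa using h4
      · exact G_diff_le p q hp hq k (m+1)
      · rw [abs_sub_comm]; exact G_diff_le p q hp hq k (m+1)
      · simpa using h4
    have hk0 : (0:ℝ) < (k : ℝ) := by exact_mod_cast hk
    have hstep : (1 / (k : ℝ)) *
        |G p q k (m+1) (ε (Fin.last m)) - G p q k (m+1) (ε' (Fin.last m))|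
        ≤ (1 / (k : ℝ)) * (4 * Real.sqrt (k : ℝ)) :=
      mul_le_mul_of_nonneg_left hdiff (by positivity)
    refine lt_of_le_of_lt hstep ?_
    set a : ℝ := Real.sqrt (k : ℝ) with ha
    set b : ℝ := Real.sqrt ((k : ℝ) + 1) with hb
    have ha2 : a ^ 2 = (k : ℝ) := Real.sq_sqrt hk0.le
    have hb2 : b ^ 2 = (k : ℝ) + 1 := Real.sq_sqrt (by positivity)
    have ha1 : 1 ≤ a := by
      rw [ha, show (1:ℝ) = Real.sqrt 1 by simp]
      exact Real.sqrt_le_sqrt (by exact_mod_cast hk)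
    have hb0 : (0:ℝ) < b := Real.sqrt_pos.2 (by positivity)
    have hk1 : (1:ℝ) ≤ (k : ℝ) := by exact_mod_cast hk
    have heq : (1 / (k : ℝ)) * (4 * a) = 4 * a / (k : ℝ) := by ring
    rw [heq, div_lt_div_iff₀ hk0 hb0]
    nlinarith [sq_nonneg (2 * a * b - 3 * (k : ℝ)),
      mul_nonneg hk0.le (sub_nonneg.2 hk1), ha2, hb2, ha1, hb0.le,
      mul_nonneg (Real.sqrt_nonneg (k:ℝ)) hb0.le]
end
end

section
/- Let ℓ ≥ 2 be an integer and let m be a Borel probability measure on [0,1)^D equipped with the filtration (ℱ_n) of ℓ-adic cubes. Then dim_*(m) ≤ h_*(m), where dim_*(m) is the lower Hausdorff dimension of m and h_*(m) = liminf_{n→∞} (−1/(n log ℓ)) Σ_{I∈ℱ_n} m(I) log m(I) is its lower entropy. -/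
/-!
Fix `h_*(m) < t < d`. Along a sequence of generations `n_j` the entropy rate stays below some
`s < t`, and a Chebyshev bound on the entropy sum shows that the cubes `I ∈ ℱ_{n_j}` with
`m(I) ≥ ℓ^{-n_j t}` carry mass at least `1 - s/t`; there are at most `ℓ^{n_j t}` of them. The limsup
`E` of their unions therefore has `m(E) ≥ 1 - s/t > 0`, while covering `E` by these cubes from
generation `n_J` on gives `d`-dimensional Hausdorff sums at most `√D^d Σ_{j ≥ J} ℓ^{-n_j (d - t)}`,
which tend to `0`. Hence `dim_H E ≤ d`.
-/

open MeasureTheory Filter Topology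
open scoped ENNReal NNReal

noncomputable section

/-- The `ℓ`-adic cube of generation `n` in `ℝ^D` indexed by `k : Fin D → ℕ`:
`Π_i [kᵢ ℓ⁻ⁿ, (kᵢ+1) ℓ⁻ⁿ)`. -/
def lCube (D ℓ n : ℕ) (k : Fin D → ℕ) : Set (EuclideanSpace ℝ (Fin D)) :=
  {x | ∀ i, (k i : ℝ) / (ℓ : ℝ) ^ n ≤ x i ∧ x i < ((k i : ℝ) + 1) / (ℓ : ℝ) ^ n}

/-- The unit box `[0,1)^D`. -/
def unitBox (D : ℕ) : Set (EuclideanSpace ℝ (Fin D)) :=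
  {x | ∀ i, 0 ≤ x i ∧ x i < 1}

/-- The `ℓ`-adic cube of generation `n` containing the point `x` (for `x ∈ [0,1)^D`). -/
def lCubeAt (D ℓ n : ℕ) (x : EuclideanSpace ℝ (Fin D)) : Set (EuclideanSpace ℝ (Fin D)) :=
  lCube D ℓ n (fun i => ⌊x i * (ℓ : ℝ) ^ n⌋₊)

/-- `Σ_{I ∈ ℱ_n} m(I) log m(I)`, the sum being over the `ℓ`-adic cubes of generation `n`
in `[0,1)^D` (with the convention `0 · log 0 = 0`). -/
def cubeEntropySum (D ℓ : ℕ) (m : Measure (EuclideanSpace ℝ (Fin D))) (n : ℕ) : ℝ :=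
  ∑ k : Fin D → Fin (ℓ ^ n),
    (m (lCube D ℓ n fun i => (k i : ℕ))).toReal *
      Real.log (m (lCube D ℓ n fun i => (k i : ℕ))).toReal

/-- The lower entropy `h_*(m) = liminf (-1/(n log ℓ)) Σ_{I ∈ ℱ_n} m(I) log m(I)`. -/
def cubeHLow (D ℓ : ℕ) (m : Measure (EuclideanSpace ℝ (Fin D))) : ℝ :=
  liminf (fun n : ℕ => (-1 / (n * Real.log ℓ)) * cubeEntropySum D ℓ m n) atTop

/-- The lower Hausdorff dimension of a measure on `[0,1)^D`:
`dim_*(m) = inf {dim_H E : E ⊆ [0,1)^D Borel, m(E) > 0}`. -/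
def cubeDimLow (D : ℕ) (m : Measure (EuclideanSpace ℝ (Fin D))) : ℝ≥0∞ :=
  ⨅ (E : Set (EuclideanSpace ℝ (Fin D))) (_ : MeasurableSet E) (_ : E ⊆ unitBox D)
    (_ : 0 < m E), dimH E

/-- The upper Hausdorff dimension of a measure on `[0,1)^D`:
`dim^*(m) = inf {dim_H E : E ⊆ [0,1)^D Borel, m([0,1)^D \ E) = 0}`. -/
def cubeDimUpp (D : ℕ) (m : Measure (EuclideanSpace ℝ (Fin D))) : ℝ≥0∞ :=
  ⨅ (E : Set (EuclideanSpace ℝ (Fin D))) (_ : MeasurableSet E) (_ : E ⊆ unitBox D)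
    (_ : m (unitBox D \ E) = 0), dimH E

open Function
open scoped Finset

namespace Real

variable {α : Type*} [Fintype α] {p : α → ℝ}

theorem sum_negMulLog_le_log_card [Nonempty α] (hp : ∀ a, 0 ≤ p a) (hsum : ∑ a, p a = 1) :
    ∑ a, negMulLog (p a) ≤ log (Fintype.card α) := by
  set N : ℝ := (Fintype.card α : ℝ)
  have hN : 0 < N := by positivity
  have jensen := concaveOn_negMulLog.le_map_sum (t := .univ) (w := fun _ => N⁻¹) (p := p)
    (fun _ _ => by positivity) (by simp [N]) (fun a _ => hp a)
  simp only [smul_eq_mul, ← Finset.mul_sum, hsum, mul_one] at jensen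
  rw [negMulLog, log_inv] at jensen
  nlinarith [mul_le_mul_of_nonneg_left jensen hN.le, mul_inv_cancel₀ hN.ne']

theorem neg_log_mul_sum_filter_lt_le_sum_negMulLog (hp0 : ∀ a, 0 ≤ p a) (hp1 : ∀ a, p a ≤ 1)
    (r : ℝ) : -log r * ∑ a with p a < r, p a ≤ ∑ a, negMulLog (p a) := by
  rw [Finset.mul_sum]
  calc ∑ a with p a < r, -log r * p a
      ≤ ∑ a with p a < r, negMulLog (p a) := by
        refine Finset.sum_le_sum fun a ha => ?_
        rcases (hp0 a).eq_or_lt with hpa | hpa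
        · simp [← hpa]
        · have := log_lt_log hpa (Finset.mem_filter.1 ha).2
          rw [negMulLog, neg_mul, mul_comm]
          nlinarith
    _ ≤ ∑ a, negMulLog (p a) :=
        Finset.sum_le_sum_of_subset_of_nonneg (Finset.filter_subset _ _)
          fun a _ _ => negMulLog_nonneg (hp0 a) (hp1 a)

end Real

theorem MeasureTheory.limsup_measure_le_measure_limsup {α : Type*} [MeasurableSpace α]
    {μ : Measure α} [IsFiniteMeasure μ] {s : ℕ → Set α} (hs : ∀ n, NullMeasurableSet (s n) μ) :
    limsup (fun n => μ (s n)) atTop ≤ μ (limsup s atTop) := by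
  have htail : Antitone fun n => ⋃ i ≥ n, s i := fun a b hab =>
    Set.biUnion_subset_biUnion_left fun i hi => le_trans hab hi
  simp only [limsup_eq_iInf_iSup_of_nat, Set.iInf_eq_iInter, Set.iSup_eq_iUnion]
  rw [htail.measure_iInter (fun n => .iUnion fun i => .iUnion fun _ => hs i)
    ⟨0, measure_ne_top _ _⟩]
  exact iInf_mono fun n => iSup₂_le fun i hi => measure_mono (Set.subset_biUnion_of_mem hi)

theorem MeasureTheory.hausdorffMeasure_limsup_eq_zero {X : Type*} [EMetricSpace X]
    [MeasurableSpace X] [BorelSpace X] {ι : ℕ → Type*} [∀ j, Countable (ι j)]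
    (U : ∀ j, ι j → Set X) {d : ℝ} (hd : 0 < d)
    (hsum : ∑' j, ∑' i, Metric.ediam (U j i) ^ d ≠ ∞) :
    μH[d] (limsup (fun j => ⋃ i, U j i) atTop) = 0 := by
  -- Each set from generation `J` on has diameter at most `tail J ^ d⁻¹`, which tends to `0`.
  set tail : ℕ → ℝ≥0∞ := fun J => ∑' j, ∑' i, Metric.ediam (U (j + J) i) ^ d
  have htail : Tendsto tail atTop (𝓝 0) := ENNReal.tendsto_sum_nat_add _ hsum
  have hr : Tendsto (fun J => tail J ^ d⁻¹) atTop (𝓝 0) := by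
    have := ((ENNReal.continuous_rpow_const (y := d⁻¹)).tendsto 0).comp htail
    rwa [ENNReal.zero_rpow_of_pos (inv_pos.2 hd)] at this
  refine le_antisymm ?_ zero_le
  calc μH[d] (limsup (fun j => ⋃ i, U j i) atTop)
      ≤ liminf (fun J => ∑' p : Σ j, ι (j + J), Metric.ediam (U (p.1 + J) p.2) ^ d) atTop := by
        refine Measure.hausdorffMeasure_le_liminf_tsum d _ (fun J => tail J ^ d⁻¹) hr
          (fun J (p : Σ j, ι (j + J)) => U (p.1 + J) p.2) (.of_forall fun J p => ?_)
          (.of_forall fun J => ?_)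
        · refine (ENNReal.le_rpow_inv_iff hd).2 ?_
          exact (ENNReal.le_tsum p.2).trans
            (ENNReal.le_tsum (f := fun j => ∑' i, Metric.ediam (U (j + J) i) ^ d) p.1)
        · rw [limsup_eq_iInf_iSup_of_nat', Set.iUnion_sigma]
          exact iInf_le _ J
    _ = liminf tail atTop := by simp only [tail, ENNReal.tsum_sigma']
    _ = 0 := htail.liminf_eq

section Cubes

variable {D ℓ : ℕ}

def gridCube (D ℓ n : ℕ) (k : Fin D → Fin (ℓ ^ n)) : Set (EuclideanSpace ℝ (Fin D)) :=
  lCube D ℓ n fun i => (k i : ℕ)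

theorem measurableSet_lCube (n : ℕ) (k : Fin D → ℕ) : MeasurableSet (lCube D ℓ n k) := by
  have : lCube D ℓ n k = ⋂ i, (fun x : EuclideanSpace ℝ (Fin D) => x i) ⁻¹'
      Set.Ico ((k i : ℝ) / ℓ ^ n) ((k i + 1) / ℓ ^ n) := by
    ext x; simp [lCube]
  rw [this]
  exact .iInter fun i => measurableSet_Ico.preimage (by fun_prop)

theorem mem_lCube_iff (hℓ : 0 < ℓ) {n : ℕ} {k : Fin D → ℕ} {x : EuclideanSpace ℝ (Fin D)} :
    x ∈ lCube D ℓ n k ↔ ∀ i, ⌊x i * ℓ ^ n⌋₊ = k i ∧ 0 ≤ x i := by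
  have hpow : (0 : ℝ) < ℓ ^ n := by positivity
  refine forall_congr' fun i => ?_
  rw [div_le_iff₀ hpow, lt_div_iff₀ hpow]
  constructor
  · rintro ⟨h₁, h₂⟩
    have hx : 0 ≤ x i := nonneg_of_mul_nonneg_left ((Nat.cast_nonneg _).trans h₁) hpow
    exact ⟨(Nat.floor_eq_iff (by positivity)).2 ⟨h₁, h₂⟩, hx⟩
  · rintro ⟨h, hx⟩
    rw [← h]
    exact ⟨Nat.floor_le (by positivity), Nat.lt_floor_add_one _⟩

theorem pairwise_disjoint_lCube (hℓ : 0 < ℓ) (n : ℕ) : Pairwise (Disjoint on lCube D ℓ n) :=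
  fun _ _ hne => Set.disjoint_left.2 fun _ hx hx' => hne <| funext fun i =>
    (((mem_lCube_iff hℓ).1 hx i).1).symm.trans ((mem_lCube_iff hℓ).1 hx' i).1

theorem iUnion_gridCube (hℓ : 0 < ℓ) (n : ℕ) : ⋃ k, gridCube D ℓ n k = unitBox D := by
  have hpow : (0 : ℝ) < ℓ ^ n := by positivity
  ext x
  simp only [Set.mem_iUnion, gridCube, mem_lCube_iff hℓ, unitBox, Set.mem_ofPred_eq]
  constructor
  · rintro ⟨k, hk⟩ i
    refine ⟨(hk i).2, ?_⟩
    have := (Nat.floor_lt (mul_nonneg (hk i).2 hpow.le)).1 ((hk i).1.trans_lt (k i).2)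
    push_cast at this
    exact (mul_lt_iff_lt_one_left hpow).1 this
  · intro hx
    refine ⟨fun i => ⟨⌊x i * ℓ ^ n⌋₊, ?_⟩, fun i => ⟨rfl, (hx i).1⟩⟩
    refine (Nat.floor_lt (mul_nonneg (hx i).1 hpow.le)).2 ?_
    push_cast
    exact mul_lt_of_lt_one_left hpow (hx i).2

theorem gridCube_subset_unitBox (hℓ : 0 < ℓ) {n : ℕ} (k : Fin D → Fin (ℓ ^ n)) :
    gridCube D ℓ n k ⊆ unitBox D :=
  (Set.subset_iUnion _ k).trans (iUnion_gridCube hℓ n).subset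

theorem ediam_lCube_le (hℓ : 0 < ℓ) (n : ℕ) (k : Fin D → ℕ) :
    Metric.ediam (lCube D ℓ n k) ≤ ENNReal.ofReal (√D / ℓ ^ n) := by
  have hpow : (0 : ℝ) < ℓ ^ n := by positivity
  refine Metric.ediam_le fun x hx y hy => ?_
  rw [edist_dist]
  refine ENNReal.ofReal_le_ofReal ?_
  have hcoord : ∀ i, dist (x i) (y i) ≤ 1 / ℓ ^ n := by
    intro i
    obtain ⟨hx₁, hx₂⟩ := hx i
    obtain ⟨hy₁, hy₂⟩ := hy i
    rw [Real.dist_eq, abs_le, add_div] at *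
    constructor <;> linarith
  calc dist x y ≤ √(∑ _i : Fin D, (1 / (ℓ : ℝ) ^ n) ^ 2) := by
        rw [EuclideanSpace.dist_eq]
        gcongr with i
        exact hcoord i
    _ = √D / ℓ ^ n := by
        simp [Real.sqrt_sq hpow.le, div_eq_mul_inv]

theorem pairwise_disjoint_gridCube (hℓ : 0 < ℓ) (n : ℕ) :
    Pairwise (Disjoint on gridCube D ℓ n) :=
  (pairwise_disjoint_lCube hℓ n).comp_of_injective fun _ _ h =>
    funext fun i => Fin.ext (congrFun h i)

theorem measurableSet_gridCube (n : ℕ) (k : Fin D → Fin (ℓ ^ n)) :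
    MeasurableSet (gridCube D ℓ n k) :=
  measurableSet_lCube n _

variable (m : Measure (EuclideanSpace ℝ (Fin D)))

theorem cubeDimLow_le_dimH {E : Set (EuclideanSpace ℝ (Fin D))} (hE : MeasurableSet E)
    (hEsub : E ⊆ unitBox D) (hEpos : 0 < m E) : cubeDimLow D m ≤ dimH E :=
  iInf_le_of_le E <| iInf_le_of_le hE <| iInf_le_of_le hEsub <| iInf_le _ hEpos

theorem sum_measureReal_gridCube [IsProbabilityMeasure m] (hℓ : 0 < ℓ)
    (hsupp : m (unitBox D) = 1) (n : ℕ) :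
    ∑ k, m.real (gridCube D ℓ n k) = 1 := by
  rw [← measureReal_iUnion_fintype (pairwise_disjoint_gridCube hℓ n) (measurableSet_gridCube n),
    iUnion_gridCube hℓ, measureReal_def, hsupp, ENNReal.toReal_one]

theorem neg_cubeEntropySum_eq (n : ℕ) :
    -cubeEntropySum D ℓ m n = ∑ k, Real.negMulLog (m.real (gridCube D ℓ n k)) := by
  simp [cubeEntropySum, Real.negMulLog, gridCube, measureReal_def, Finset.sum_neg_distrib]

-- `cubeHLow D ℓ m` is by definition `liminf (cubeEntropyRate D ℓ m) atTop`; at `n = 0` the rate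
-- is the junk value `0`, hence the hypothesis `n ≠ 0` in the estimates below.
def cubeEntropyRate (D ℓ : ℕ) (m : Measure (EuclideanSpace ℝ (Fin D))) (n : ℕ) : ℝ :=
  (-1 / (n * Real.log ℓ)) * cubeEntropySum D ℓ m n

theorem cubeEntropyRate_eq (n : ℕ) :
    cubeEntropyRate D ℓ m n = -cubeEntropySum D ℓ m n / (n * Real.log ℓ) := by
  rw [cubeEntropyRate]; ring

theorem cubeEntropyRate_nonneg [IsProbabilityMeasure m] (n : ℕ) :
    0 ≤ cubeEntropyRate D ℓ m n := by
  rw [cubeEntropyRate_eq, neg_cubeEntropySum_eq]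
  have := Real.log_natCast_nonneg ℓ
  exact div_nonneg (Finset.sum_nonneg fun k _ =>
    Real.negMulLog_nonneg measureReal_nonneg measureReal_le_one) (by positivity)

theorem cubeEntropyRate_le [IsProbabilityMeasure m] (hℓ : 0 < ℓ) (hsupp : m (unitBox D) = 1)
    (n : ℕ) : cubeEntropyRate D ℓ m n ≤ D := by
  have : Nonempty (Fin (ℓ ^ n)) := ⟨⟨0, by positivity⟩⟩
  have := Real.log_natCast_nonneg ℓ
  rw [cubeEntropyRate_eq, neg_cubeEntropySum_eq]
  refine div_le_of_le_mul₀ (by positivity) (by positivity) ?_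
  calc ∑ k, Real.negMulLog (m.real (gridCube D ℓ n k))
      ≤ Real.log (Fintype.card (Fin D → Fin (ℓ ^ n))) :=
        Real.sum_negMulLog_le_log_card (fun _ => measureReal_nonneg)
          (sum_measureReal_gridCube m hℓ hsupp n)
    _ = D * (n * Real.log ℓ) := by
        simp only [Fintype.card_fun, Fintype.card_fin, ← pow_mul, Nat.cast_pow, Real.log_pow]
        push_cast; ring

def goodCubes (D ℓ : ℕ) (m : Measure (EuclideanSpace ℝ (Fin D))) (n : ℕ) (t : ℝ) :
    Finset (Fin D → Fin (ℓ ^ n)) :=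
  {k | (ℓ : ℝ) ^ (-(n * t)) ≤ m.real (gridCube D ℓ n k)}

variable [IsProbabilityMeasure m]

theorem card_goodCubes_le (hℓ : 0 < ℓ) (hsupp : m (unitBox D) = 1) (n : ℕ) (t : ℝ) :
    (#(goodCubes D ℓ m n t) : ℝ) ≤ (ℓ : ℝ) ^ (n * t) := by
  have hr : (0 : ℝ) < (ℓ : ℝ) ^ (-(n * t)) := by positivity
  have hmass : #(goodCubes D ℓ m n t) • (ℓ : ℝ) ^ (-(n * t)) ≤ 1 :=
    calc #(goodCubes D ℓ m n t) • (ℓ : ℝ) ^ (-(n * t))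
        ≤ ∑ k ∈ goodCubes D ℓ m n t, m.real (gridCube D ℓ n k) :=
          Finset.card_nsmul_le_sum _ _ _ fun k hk => (Finset.mem_filter.1 hk).2
      _ ≤ ∑ k, m.real (gridCube D ℓ n k) :=
          Finset.sum_le_sum_of_subset_of_nonneg (Finset.subset_univ _)
            fun _ _ _ => measureReal_nonneg
      _ = 1 := sum_measureReal_gridCube m hℓ hsupp n
  rwa [nsmul_eq_mul, ← le_div_iff₀ hr, Real.rpow_neg (by positivity), one_div, inv_inv] at hmass

theorem one_sub_cubeEntropyRate_div_le_measure_goodCubes (hℓ : 1 < ℓ)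
    (hsupp : m (unitBox D) = 1) {n : ℕ} (hn : n ≠ 0) {t : ℝ} (ht : 0 < t) :
    ENNReal.ofReal (1 - cubeEntropyRate D ℓ m n / t) ≤
      m (⋃ k : goodCubes D ℓ m n t, gridCube D ℓ n k) := by
  have hlog : 0 < Real.log ℓ := Real.log_pos (by exact_mod_cast hℓ)
  have hnlog : 0 < n * Real.log ℓ := by positivity
  set bad := ∑ k with m.real (gridCube D ℓ n k) < (ℓ : ℝ) ^ (-(n * t)), m.real (gridCube D ℓ n k)
  have hbad : n * Real.log ℓ * (t * bad) ≤ n * Real.log ℓ * cubeEntropyRate D ℓ m n := by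
    have := Real.neg_log_mul_sum_filter_lt_le_sum_negMulLog
      (p := fun k => m.real (gridCube D ℓ n k)) (fun _ => measureReal_nonneg)
      (fun _ => measureReal_le_one (μ := m)) ((ℓ : ℝ) ^ (-(n * t)))
    rw [Real.log_rpow (by positivity), ← neg_cubeEntropySum_eq] at this
    rw [cubeEntropyRate_eq, mul_div_cancel₀ _ hnlog.ne']
    linarith
  have hsplit := Finset.sum_filter_add_sum_filter_not Finset.univ
    (fun k => (ℓ : ℝ) ^ (-(n * t)) ≤ m.real (gridCube D ℓ n k)) fun k => m.real (gridCube D ℓ n k)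
  simp only [not_le, sum_measureReal_gridCube m (Nat.zero_lt_of_lt hℓ) hsupp n] at hsplit
  have hbad_le : bad ≤ cubeEntropyRate D ℓ m n / t :=
    (le_div_iff₀' ht).2 (le_of_mul_le_mul_left hbad hnlog)
  refine ENNReal.ofReal_le_of_le_toReal ?_
  rw [← measureReal_def, Set.iUnion_subtype, measureReal_biUnion_finset
    ((pairwise_disjoint_gridCube (Nat.zero_lt_of_lt hℓ) n).set_pairwise _)
    fun k _ => measurableSet_gridCube n k]
  unfold goodCubes
  linarith

theorem sum_ediam_goodCubes_rpow_le (hℓ : 0 < ℓ) (hsupp : m (unitBox D) = 1) (n : ℕ) (t : ℝ)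
    {d : ℝ} (hd : 0 ≤ d) :
    ∑ k ∈ goodCubes D ℓ m n t, Metric.ediam (gridCube D ℓ n k) ^ d ≤
      ENNReal.ofReal (√D ^ d * ((ℓ : ℝ) ^ (t - d)) ^ n) := by
  have hℓ' : (0 : ℝ) < ℓ := by exact_mod_cast hℓ
  have hscale : (ℓ : ℝ) ^ (n * t) * (√D / ℓ ^ n) ^ d = √D ^ d * ((ℓ : ℝ) ^ (t - d)) ^ n := by
    rw [Real.div_rpow (by positivity) (by positivity), ← Real.rpow_natCast_mul hℓ'.le,
      ← Real.rpow_mul_natCast hℓ'.le, sub_mul, Real.rpow_sub hℓ', mul_comm t, mul_comm d]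
    ring
  calc ∑ k ∈ goodCubes D ℓ m n t, Metric.ediam (gridCube D ℓ n k) ^ d
      ≤ ∑ k ∈ goodCubes D ℓ m n t, ENNReal.ofReal ((√D / ℓ ^ n) ^ d) := by
        refine Finset.sum_le_sum fun k _ => ?_
        rw [← ENNReal.ofReal_rpow_of_nonneg (by positivity) hd]
        exact ENNReal.rpow_le_rpow (ediam_lCube_le hℓ n _) hd
    _ = ENNReal.ofReal (#(goodCubes D ℓ m n t) * (√D / ℓ ^ n) ^ d) := by
        rw [Finset.sum_const, nsmul_eq_mul, ENNReal.ofReal_mul (by positivity),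
          ENNReal.ofReal_natCast]
    _ ≤ ENNReal.ofReal (√D ^ d * ((ℓ : ℝ) ^ (t - d)) ^ n) := by
        rw [← hscale]
        gcongr
        exact card_goodCubes_le m hℓ hsupp n t

theorem tsum_sum_ediam_goodCubes_rpow_ne_top (hℓ : 1 < ℓ) (hsupp : m (unitBox D) = 1)
    {ψ : ℕ → ℕ} (hψ : StrictMono ψ) {t d : ℝ} (hd : 0 ≤ d) (htd : t < d) :
    ∑' j, ∑ k ∈ goodCubes D ℓ m (ψ j) t, Metric.ediam (gridCube D ℓ (ψ j) k) ^ d ≠ ∞ := by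
  set q : ℝ := (ℓ : ℝ) ^ (t - d)
  have hq0 : 0 ≤ q := by positivity
  have hq1 : q < 1 := Real.rpow_lt_one_of_one_lt_of_neg (by exact_mod_cast hℓ) (by linarith)
  refine ne_top_of_le_ne_top ?_ <| ENNReal.tsum_le_tsum fun j =>
    (sum_ediam_goodCubes_rpow_le m (Nat.zero_lt_of_lt hℓ) hsupp (ψ j) t hd).trans <|
      ENNReal.ofReal_le_ofReal <| mul_le_mul_of_nonneg_left
        (pow_le_pow_of_le_one hq0 hq1.le (hψ.id_le j)) (by positivity)
  show ∑' j, ENNReal.ofReal (√D ^ d * q ^ j) ≠ ∞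
  simp_rw [ENNReal.ofReal_mul (by positivity : 0 ≤ √D ^ d), ENNReal.ofReal_pow hq0,
    ENNReal.tsum_mul_left, ENNReal.tsum_geometric]
  exact ENNReal.mul_ne_top ENNReal.ofReal_ne_top
    (ENNReal.inv_ne_top.2 (tsub_pos_of_lt (ENNReal.ofReal_lt_one.2 hq1)).ne')

theorem isBoundedUnder_cubeEntropyRate (hℓ : 0 < ℓ) (hsupp : m (unitBox D) = 1) :
    IsBoundedUnder (· ≤ ·) atTop (cubeEntropyRate D ℓ m) :=
  isBoundedUnder_of ⟨D, cubeEntropyRate_le m hℓ hsupp⟩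

theorem cubeHLow_nonneg (hℓ : 0 < ℓ) (hsupp : m (unitBox D) = 1) : 0 ≤ cubeHLow D ℓ m :=
  le_liminf_of_le (isBoundedUnder_cubeEntropyRate m hℓ hsupp).isCoboundedUnder_ge
    (.of_forall (cubeEntropyRate_nonneg m))

theorem cubeDimLow_le_of_cubeHLow_lt (hℓ : 1 < ℓ) (hsupp : m (unitBox D) = 1) {d : ℝ}
    (hd : cubeHLow D ℓ m < d) : cubeDimLow D m ≤ ENNReal.ofReal d := by
  have hℓ0 : 0 < ℓ := Nat.zero_lt_of_lt hℓ
  obtain ⟨t, hht, htd⟩ := exists_between hd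
  obtain ⟨s, hhs, hst⟩ := exists_between hht
  have ht : 0 < t := (cubeHLow_nonneg m hℓ0 hsupp).trans_lt hht
  have hd0 : 0 < d := ht.trans htd
  obtain ⟨ψ, hψ, hψs⟩ : ∃ ψ : ℕ → ℕ, StrictMono ψ ∧
      ∀ j, cubeEntropyRate D ℓ m (ψ j) < s ∧ ψ j ≠ 0 :=
    extraction_of_frequently_atTop <| (frequently_lt_of_liminf_lt
      (isBoundedUnder_cubeEntropyRate m hℓ0 hsupp).isCoboundedUnder_ge hhs).and_eventually
      (eventually_ne_atTop 0)
  set E := limsup (fun j => ⋃ k : goodCubes D ℓ m (ψ j) t, gridCube D ℓ (ψ j) k) atTop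
  have hEpos : 0 < m E := by
    refine (ENNReal.ofReal_pos.2 (sub_pos.2 ((div_lt_one ht).2 hst))).trans_le ?_
    refine (le_limsup_of_frequently_le (.of_forall fun j => ?_)).trans
      (limsup_measure_le_measure_limsup fun j => (MeasurableSet.iUnion fun k =>
        measurableSet_gridCube _ _).nullMeasurableSet)
    refine le_trans ?_ (one_sub_cubeEntropyRate_div_le_measure_goodCubes m hℓ hsupp (hψs j).2 ht)
    gcongr
    exact (hψs j).1.le
  have hE : μH[d] E = 0 := hausdorffMeasure_limsup_eq_zero _ hd0 <|
    ne_top_of_le_ne_top (tsum_sum_ediam_goodCubes_rpow_ne_top m hℓ hsupp hψ hd0.le htd)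
      (ENNReal.tsum_le_tsum fun j =>
        (Finset.tsum_subtype _ fun k => Metric.ediam (gridCube D ℓ (ψ j) k) ^ d).le)
  calc cubeDimLow D m
      ≤ dimH E := cubeDimLow_le_dimH m
        (.measurableSet_limsup fun j => .iUnion fun k => measurableSet_gridCube _ _)
        (limsup_le_of_le (h := .of_forall fun j =>
          Set.iUnion_subset fun k => gridCube_subset_unitBox hℓ0 _)) hEpos
    _ ≤ ENNReal.ofReal d := dimH_le_of_hausdorffMeasure_ne_top (d := d.toNNReal) <| by
        rw [Real.coe_toNNReal _ hd0.le, hE]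
        exact ENNReal.zero_ne_top

end Cubes

theorem cubeDimLow_le_cubeHLow_general (D ℓ : ℕ) (hℓ : 2 ≤ ℓ)
    (m : Measure (EuclideanSpace ℝ (Fin D))) [IsProbabilityMeasure m]
    (hsupp : m (unitBox D) = 1) :
    cubeDimLow D m ≤ ENNReal.ofReal (cubeHLow D ℓ m) := by
  refine le_of_forall_gt_imp_ge_of_dense fun c hc => ?_
  obtain ⟨d, -, hhd, hdc⟩ := ENNReal.lt_iff_exists_real_btwn.1 hc
  exact (cubeDimLow_le_of_cubeHLow_lt m hℓ hsupp (ENNReal.ofReal_lt_ofReal_iff'.1 hhd).1).trans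
    hdc.le

/-- **Theorem (Batakis–Heurteaux, first part).** For any probability measure `m` on
`[0,1)^D` equipped with the filtration of `ℓ`-adic cubes (`ℓ ≥ 2`),
`dim_*(m) ≤ h_*(m)`. -/
theorem cubeDimLow_le_cubeHLow (D ℓ : ℕ) (hD : 1 ≤ D) (hℓ : 2 ≤ ℓ)
    (m : Measure (EuclideanSpace ℝ (Fin D))) [IsProbabilityMeasure m]
    (hsupp : m (unitBox D) = 1) :
    cubeDimLow D m ≤ ENNReal.ofReal (cubeHLow D ℓ m) :=
  cubeDimLow_le_cubeHLow_general D ℓ hℓ m hsupp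
end
end

section
/- Let (X_n)_{n≥1} be a sequence of real random variables on a probability space (𝕏, ℬ, P) that is uniformly bounded in L² (i.e. sup_n E[X_n²] < ∞), and let (ℑ_n)_{n≥0} be an increasing sequence of σ-subalgebras of ℬ such that X_n is ℑ_n-measurable for every n. Then (1/n) Σ_{k=1}^n ( X_k − E(X_k | ℑ_{k−1}) ) → 0 as n → ∞, P-almost surely. -/
open MeasureTheory Filter Topology Finset
open scoped ENNReal

/-!
The centred variables `Y k = X k - E[X k | ℑ (k - 1)]` are martingale differences, so
`M n = ∑_{k ≤ n} Y k / k` is a martingale. Its increments are orthogonal in `L²`, whence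
`E[M n ^ 2] = ∑_{k ≤ n} E[Y k ^ 2] / k ^ 2 ≤ (2 C) ^ 2 ∑ 1 / k ^ 2` stays bounded and `M` converges
almost surely by the martingale convergence theorem. Kronecker's lemma turns the convergence of
`∑ Y k / k` into `(1 / n) ∑_{k ≤ n} Y k → 0`.
-/

theorem Filter.Tendsto.kronecker {a : ℕ → ℝ} {s : ℝ}
    (h : Tendsto (fun n : ℕ ↦ ∑ k ∈ Icc 1 n, (k : ℝ)⁻¹ * a k) atTop (𝓝 s)) :
    Tendsto (fun n : ℕ ↦ 1 / (n : ℝ) * ∑ k ∈ Icc 1 n, a k) atTop (𝓝 0) := by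
  set S : ℕ → ℝ := fun n ↦ ∑ k ∈ Icc 1 n, (k : ℝ)⁻¹ * a k
  have summation_by_parts (n : ℕ) :
      ∑ k ∈ Icc 1 n, a k = n * S n - ∑ j ∈ range n, S j := by
    induction n with
    | zero => simp [S]
    | succ n ih =>
      have hSsucc : S (n + 1) = S n + ((n : ℝ) + 1)⁻¹ * a (n + 1) := by
        simp only [S, sum_Icc_succ_top (Nat.le_add_left 1 n), Nat.cast_add_one]
      rw [sum_Icc_succ_top (Nat.le_add_left 1 n), ih, sum_range_succ, hSsucc]
      push_cast
      field_simp
      ring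
  have hlim : Tendsto (fun n : ℕ ↦ S n - (n : ℝ)⁻¹ • ∑ j ∈ range n, S j) atTop (𝓝 0) := by
    simpa using h.sub h.cesaro
  refine hlim.congr' ?_
  filter_upwards [eventually_ne_atTop 0] with n hn
  rw [summation_by_parts, smul_eq_mul]
  field_simp

namespace MeasureTheory

section

variable {α E : Type*} [NormedAddCommGroup E] [NormedSpace ℝ E] [CompleteSpace E]
  {m m0 : MeasurableSpace α} {μ : Measure α}

theorem lpNorm_two_sq_eq_integral_sq {f : α → ℝ} (hf : AEStronglyMeasurable f μ) :
    lpNorm f 2 μ ^ 2 = ∫ x, f x ^ 2 ∂μ := by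
  rw [lpNorm_eq_integral_norm_rpow_toReal two_ne_zero ENNReal.ofNat_ne_top hf]
  have h0 : 0 ≤ ∫ x, ‖f x‖ ^ (2 : ℝ) ∂μ := integral_nonneg fun x ↦ by positivity
  rw [ENNReal.toReal_ofNat, ← Real.rpow_natCast, ← Real.rpow_mul h0]
  norm_num [Real.rpow_two]

theorem condExp_sub_condExp_ae_eq_zero (hm : m ≤ m0) [SigmaFinite (μ.trim hm)] {f : α → E}
    (hf : Integrable f μ) :
    μ[f - μ[f | m] | m] =ᵐ[μ] 0 := by
  filter_upwards [condExp_sub hf integrable_condExp m] with x hx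
  rw [hx, Pi.sub_apply,
    condExp_of_stronglyMeasurable hm stronglyMeasurable_condExp integrable_condExp, sub_self]
  rfl

theorem lpNorm_sub_condExp_le {p : ℝ≥0∞} (hp : 1 ≤ p) {f : α → E} (hf : MemLp f p μ) :
    lpNorm (f - μ[f | m]) p μ ≤ 2 * lpNorm f p μ := by
  linarith [lpNorm_sub_le (g := μ[f | m]) hf hp, hf.lpNorm_condExp_le_lpNorm (m := m) hp]

end

namespace Martingale

variable {Ω : Type*} {m0 : MeasurableSpace Ω} {μ : Measure Ω} {ℱ : Filtration ℕ m0}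
  {M : ℕ → Ω → ℝ}

theorem integral_mul_sub_eq_zero [IsFiniteMeasure μ] (hM : Martingale M ℱ μ)
    (hM2 : ∀ n, MemLp (M n) 2 μ) (n : ℕ) :
    ∫ ω, M n ω * (M (n + 1) ω - M n ω) ∂μ = 0 := by
  have hΔ : Integrable (M (n + 1) - M n) μ := (hM.integrable _).sub (hM.integrable n)
  have hcross : Integrable (M n * (M (n + 1) - M n)) μ :=
    (hM2 n).integrable_mul ((hM2 (n + 1)).sub (hM2 n))
  have hΔcond : μ[M (n + 1) - M n | ℱ n] =ᵐ[μ] 0 := by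
    filter_upwards [condExp_sub (hM.integrable _) (hM.integrable n) (ℱ n),
      hM.condExp_ae_eq n.le_succ] with ω h1 h2
    rw [h1, Pi.sub_apply, h2,
      condExp_of_stronglyMeasurable (ℱ.le n) (hM.stronglyAdapted n) (hM.integrable n),
      sub_self]
    rfl
  calc ∫ ω, M n ω * (M (n + 1) ω - M n ω) ∂μ
      = ∫ ω, μ[M n * (M (n + 1) - M n) | ℱ n] ω ∂μ := (integral_condExp (ℱ.le n)).symm
    _ = ∫ ω, (M n * μ[M (n + 1) - M n | ℱ n]) ω ∂μ :=
        integral_congr_ae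
          (condExp_mul_of_stronglyMeasurable_left (hM.stronglyAdapted n) hcross hΔ)
    _ = 0 := by
        rw [integral_congr_ae (hΔcond.mul_left (f₃ := M n))]
        simp

theorem integral_sq_succ [IsFiniteMeasure μ] (hM : Martingale M ℱ μ)
    (hM2 : ∀ n, MemLp (M n) 2 μ) (n : ℕ) :
    ∫ ω, M (n + 1) ω ^ 2 ∂μ = ∫ ω, M n ω ^ 2 ∂μ + ∫ ω, (M (n + 1) ω - M n ω) ^ 2 ∂μ := by
  have hΔ : MemLp (M (n + 1) - M n) 2 μ := (hM2 _).sub (hM2 n)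
  have hsq : Integrable (fun ω ↦ M n ω ^ 2) μ := (hM2 n).integrable_sq
  have hcross : Integrable (fun ω ↦ 2 * (M n ω * (M (n + 1) ω - M n ω))) μ :=
    ((hM2 n).integrable_mul hΔ).const_mul 2
  have hΔsq : Integrable (fun ω ↦ (M (n + 1) ω - M n ω) ^ 2) μ := hΔ.integrable_sq
  calc ∫ ω, M (n + 1) ω ^ 2 ∂μ
      = ∫ ω, (M n ω ^ 2 + 2 * (M n ω * (M (n + 1) ω - M n ω))
          + (M (n + 1) ω - M n ω) ^ 2) ∂μ := by
        congr 1 with ω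
        ring
    _ = ∫ ω, M n ω ^ 2 ∂μ + ∫ ω, (M (n + 1) ω - M n ω) ^ 2 ∂μ := by
        rw [integral_add (by exact hsq.add hcross) hΔsq, integral_add hsq hcross,
          integral_const_mul, hM.integral_mul_sub_eq_zero hM2, mul_zero, add_zero]

theorem integral_sq_le_sum [IsFiniteMeasure μ] (hM : Martingale M ℱ μ)
    (hM2 : ∀ n, MemLp (M n) 2 μ) (hM0 : M 0 = 0) {b : ℕ → ℝ}
    (hb : ∀ n, ∫ ω, (M (n + 1) ω - M n ω) ^ 2 ∂μ ≤ b n) (n : ℕ) :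
    ∫ ω, M n ω ^ 2 ∂μ ≤ ∑ k ∈ range n, b k := by
  induction n with
  | zero => simp [hM0]
  | succ n ih =>
    rw [hM.integral_sq_succ hM2, sum_range_succ]
    exact add_le_add ih (hb n)

theorem ae_exists_tendsto_of_integral_sq_le [IsProbabilityMeasure μ]
    (hM : Martingale M ℱ μ) (hM2 : ∀ n, MemLp (M n) 2 μ) {B : ℝ}
    (hB : ∀ n, ∫ ω, M n ω ^ 2 ∂μ ≤ B) :
    ∀ᵐ ω ∂μ, ∃ c, Tendsto (fun n ↦ M n ω) atTop (𝓝 c) := by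
  refine hM.submartingale.exists_ae_tendsto_of_bdd (R := (√B).toNNReal) fun n ↦ ?_
  have hlpNorm : lpNorm (M n) 2 μ ≤ √B := by
    refine Real.le_sqrt_of_sq_le ?_
    rw [lpNorm_two_sq_eq_integral_sq (hM2 n).1]
    exact hB n
  calc eLpNorm (M n) 1 μ ≤ eLpNorm (M n) 2 μ :=
        eLpNorm_le_eLpNorm_of_exponent_le one_le_two (hM2 n).1
    _ = ENNReal.ofReal (lpNorm (M n) 2 μ) := (ofReal_lpNorm (hM2 n)).symm
    _ ≤ ENNReal.ofReal √B := ENNReal.ofReal_le_ofReal hlpNorm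

end Martingale

section MartingaleDifferences

variable {Ω : Type*} {m0 : MeasurableSpace Ω} {μ : Measure Ω} {ℱ : Filtration ℕ m0}
  {X : ℕ → Ω → ℝ}

theorem martingale_sum_smul_sub_condExp [IsFiniteMeasure μ]
    (hX : ∀ k, 1 ≤ k → StronglyMeasurable[ℱ k] (X k))
    (hXint : ∀ k, 1 ≤ k → Integrable (X k) μ) (c : ℕ → ℝ) :
    Martingale (fun n ↦ ∑ k ∈ Icc 1 n, c k • (X k - μ[X k | ℱ (k - 1)])) ℱ μ := by
  refine martingale_of_condExp_sub_eq_zero_nat (fun n ↦ ?_) (fun n ↦ ?_) (fun n ↦ ?_)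
  · refine Finset.stronglyMeasurable_sum _ fun k hk ↦ ?_
    obtain ⟨hk1, hkn⟩ := mem_Icc.mp hk
    exact (((hX k hk1).mono (ℱ.mono hkn)).sub
      (stronglyMeasurable_condExp.mono (ℱ.mono (k.sub_le 1 |>.trans hkn)))).const_smul _
  · exact integrable_finsetSum' _ fun k hk ↦
      ((hXint k (mem_Icc.mp hk).1).sub integrable_condExp).smul _
  · have hincrement : ∑ k ∈ Icc 1 (n + 1), c k • (X k - μ[X k | ℱ (k - 1)])
        - ∑ k ∈ Icc 1 n, c k • (X k - μ[X k | ℱ (k - 1)])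
        = c (n + 1) • (X (n + 1) - μ[X (n + 1) | ℱ n]) := by
      rw [sum_Icc_succ_top (Nat.le_add_left 1 n), add_sub_cancel_left, Nat.add_sub_cancel]
    rw [hincrement]
    filter_upwards [condExp_smul (c (n + 1)) (X (n + 1) - μ[X (n + 1) | ℱ n]) (ℱ n),
      condExp_sub_condExp_ae_eq_zero (ℱ.le n) (hXint (n + 1) (Nat.le_add_left 1 n))]
      with ω h1 h2
    simp [h1, h2]

theorem ae_exists_tendsto_sum_inv_mul_sub_condExp [IsProbabilityMeasure μ]
    (hX : ∀ k, 1 ≤ k → StronglyMeasurable[ℱ k] (X k)) (hX2 : ∀ k, 1 ≤ k → MemLp (X k) 2 μ)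
    {C : ℝ} (hC : ∀ k, 1 ≤ k → lpNorm (X k) 2 μ ≤ C) :
    ∀ᵐ ω ∂μ, ∃ s, Tendsto
      (fun n : ℕ ↦ ∑ k ∈ Icc 1 n, (k : ℝ)⁻¹ * (X k ω - μ[X k | ℱ (k - 1)] ω)) atTop (𝓝 s) := by
  set Y : ℕ → Ω → ℝ := fun k ↦ X k - μ[X k | ℱ (k - 1)]
  set M : ℕ → Ω → ℝ := fun n ↦ ∑ k ∈ Icc 1 n, (k : ℝ)⁻¹ • Y k
  have hM : Martingale M ℱ μ :=
    martingale_sum_smul_sub_condExp hX (fun k hk ↦ (hX2 k hk).integrable one_le_two) _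
  have hY2 (k : ℕ) (hk : 1 ≤ k) : MemLp (Y k) 2 μ :=
    (hX2 k hk).sub ((hX2 k hk).condExp one_le_two)
  have hM2 : ∀ n, MemLp (M n) 2 μ := fun n ↦
    memLp_finsetSum' _ fun k hk ↦ (hY2 k (mem_Icc.mp hk).1).const_smul _
  have hincrement : ∀ n, ∫ ω, (M (n + 1) ω - M n ω) ^ 2 ∂μ
      ≤ (2 * C) ^ 2 * (((n + 1 : ℕ) : ℝ) ^ 2)⁻¹ := by
    intro n
    have hn : 1 ≤ n + 1 := Nat.le_add_left 1 n
    have hY : ∫ ω, Y (n + 1) ω ^ 2 ∂μ ≤ (2 * C) ^ 2 := by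
      rw [← lpNorm_two_sq_eq_integral_sq (hY2 (n + 1) hn).1]
      have hYnorm : lpNorm (Y (n + 1)) 2 μ ≤ 2 * C :=
        (lpNorm_sub_condExp_le one_le_two (hX2 (n + 1) hn)).trans (by linarith [hC (n + 1) hn])
      exact pow_le_pow_left₀ lpNorm_nonneg hYnorm 2
    have hΔ (ω : Ω) :
        (M (n + 1) ω - M n ω) ^ 2 = (((n + 1 : ℕ) : ℝ) ^ 2)⁻¹ * Y (n + 1) ω ^ 2 := by
      simp [M, sum_Icc_succ_top hn, mul_pow]
    rw [integral_congr_ae (ae_of_all _ hΔ), integral_const_mul, mul_comm]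
    exact mul_le_mul_of_nonneg_right hY (by positivity)
  have hsummable : Summable fun k : ℕ ↦ (((k + 1 : ℕ) : ℝ) ^ 2)⁻¹ :=
    (summable_nat_add_iff 1).mpr (Real.summable_nat_pow_inv.mpr one_lt_two)
  have hbound (n : ℕ) : ∫ ω, M n ω ^ 2 ∂μ ≤ (2 * C) ^ 2 * ∑' k : ℕ, (((k + 1 : ℕ) : ℝ) ^ 2)⁻¹ := by
    refine (hM.integral_sq_le_sum hM2 (by simp [M]) hincrement n).trans ?_
    rw [← mul_sum]
    gcongr
    exact hsummable.sum_le_tsum _ fun k _ ↦ by positivity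
  filter_upwards [hM.ae_exists_tendsto_of_integral_sq_le hM2 hbound] with ω ⟨s, hs⟩
  exact ⟨s, by simpa [M, Y, Finset.sum_apply] using hs⟩

end MartingaleDifferences

end MeasureTheory

/-- **Law of Large Numbers.** Let `(X_n)_{n ≥ 1}` be a sequence of real random variables
on a probability space `(𝕏, ℬ, P)`, uniformly bounded in `L²`, and let `(ℑ_n)_{n ≥ 0}` be
an increasing sequence of sub-σ-algebras of `ℬ` such that `X_n` is `ℑ_n`-measurable for
every `n ≥ 1`. Then `(1/n) Σ_{k=1}^n (X_k - E(X_k | ℑ_{k-1})) → 0` `P`-almost surely. -/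
theorem lln_martingale_differences
    {Ω : Type*} [mΩ : MeasurableSpace Ω] (P : Measure Ω) [IsProbabilityMeasure P]
    (ℑ : ℕ → MeasurableSpace Ω) (hmono : Monotone ℑ) (hle : ∀ n, ℑ n ≤ mΩ)
    (X : ℕ → Ω → ℝ) (hadapt : ∀ n, 1 ≤ n → Measurable[ℑ n] (X n))
    (hbdd : ∃ C : ℝ≥0∞, C < ⊤ ∧ ∀ n, 1 ≤ n → eLpNorm (X n) 2 P ≤ C) :
    ∀ᵐ ω ∂P, Tendsto
      (fun n : ℕ => (1 / (n : ℝ)) * ∑ k ∈ Finset.Icc 1 n, (X k ω - (P[X k | ℑ (k - 1)]) ω))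
      atTop (𝓝 0) := by
  obtain ⟨C, hC_lt, hC⟩ := hbdd
  let ℱ : Filtration ℕ mΩ := ⟨ℑ, hmono, hle⟩
  have hX2 (k : ℕ) (hk : 1 ≤ k) : MemLp (X k) 2 P :=
    ⟨((hadapt k hk).mono (hle k) le_rfl).aestronglyMeasurable, (hC k hk).trans_lt hC_lt⟩
  have hXnorm (k : ℕ) (hk : 1 ≤ k) : lpNorm (X k) 2 P ≤ C.toReal := by
    rw [← toReal_eLpNorm (hX2 k hk).1]
    exact ENNReal.toReal_mono hC_lt.ne (hC k hk)
  filter_upwards [ae_exists_tendsto_sum_inv_mul_sub_condExp (ℱ := ℱ)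
    (fun k hk ↦ (hadapt k hk).stronglyMeasurable) hX2 hXnorm] with ω ⟨s, hs⟩
  exact hs.kronecker
end
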